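/- arXiv:2307.13317 — 9 statements merged into one kernel-verified Lean document; each statement's English description precedes it below -/
import Mathlib

section
/- For k≥2, let a k-Pell string of length n be a word over the alphabet {0,1,…,k} of length n in which every maximal run of the letter k has even length. Then the number of k-Pell strings of length n equals F(n+1,k), the (n+1)-st k-Fibonacci number. -/
def kFib (k : ℕ) : ℕ → ℕ
  | 0 => 0
  | 1 => 1
  | n + 2 => k * kFib k (n + 1) + kFib k n

def isPellStr (k : ℕ) : List ℕ → Bool
  | [] => true
  | [a] => decide (a < k)
  | a :: b :: rest =>
    if a = k then (b == k) && isPellStr k rest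
    else decide (a < k) && isPellStr k (b :: rest)

/-! A Pell string of length `n + 2` either starts with a letter `a < k` followed by a Pell
string of length `n + 1`, or starts with the double letter `kk` followed by a Pell string of
length `n`. The two kinds are disjoint, so the counts satisfy the `k`-Fibonacci recursion. -/

theorem isPellStr_cons_cons_eq_true_iff {k a b : ℕ} {l : List ℕ} :
    isPellStr k (a :: b :: l) = true ↔
      (a < k ∧ isPellStr k (b :: l) = true) ∨ (a = k ∧ b = k ∧ isPellStr k l = true) := by
  by_cases ha : a = k <;> simp [isPellStr, ha]

def pellStrings (k : ℕ) : ℕ → Finset (List ℕ)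
  | 0 => {[]}
  | 1 => (Finset.range k).image fun a => [a]
  | n + 2 =>
      (Finset.range k ×ˢ pellStrings k (n + 1)).image (fun p => p.1 :: p.2) ∪
        (pellStrings k n).image fun l => k :: k :: l

theorem mem_pellStrings {k : ℕ} :
    ∀ {n : ℕ} {l : List ℕ}, l ∈ pellStrings k n ↔ l.length = n ∧ isPellStr k l = true
  | 0, l => by cases l <;> simp [pellStrings, isPellStr]
  | 1, l => by
    match l with
    | [] | _ :: _ :: _ => simp [pellStrings]
    | [a] => simp [pellStrings, isPellStr]
  | n + 2, l => by
    match l with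
    | [] | [_] => simp [pellStrings, mem_pellStrings (n := n + 1)]
    | a :: b :: l =>
      simp only [pellStrings, Finset.mem_union, Finset.mem_image, Finset.mem_product,
        Finset.mem_range, Prod.exists, List.cons.injEq, List.length_cons,
        isPellStr_cons_cons_eq_true_iff, mem_pellStrings (n := n + 1), mem_pellStrings (n := n)]
      constructor
      · rintro (⟨a, _, ⟨ha, hlen, hl⟩, rfl, rfl⟩ | ⟨l, ⟨hlen, hl⟩, rfl, rfl, rfl⟩)
        · exact ⟨by simpa using hlen, .inl ⟨ha, hl⟩⟩
        · exact ⟨hlen ▸ rfl, .inr ⟨rfl, rfl, hl⟩⟩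
      · rintro ⟨hlen, ⟨ha, hl⟩ | ⟨rfl, rfl, hl⟩⟩
        · exact .inl ⟨a, b :: l, ⟨ha, by simpa using hlen, hl⟩, rfl, rfl⟩
        · exact .inr ⟨l, ⟨by omega, hl⟩, rfl, rfl, rfl⟩

theorem card_pellStrings (k : ℕ) : ∀ n, (pellStrings k n).card = kFib k (n + 1)
  | 0 => rfl
  | 1 => by simp [pellStrings, Finset.card_image_of_injective, List.singleton_injective, kFib]
  | n + 2 => by
    have hdisj : Disjoint ((Finset.range k ×ˢ pellStrings k (n + 1)).image fun p => p.1 :: p.2)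
        ((pellStrings k n).image fun l => k :: k :: l) := by
      simp only [Finset.disjoint_left, Finset.mem_image, Finset.mem_product, Finset.mem_range]
      rintro _ ⟨⟨a, _⟩, ⟨ha, _⟩, rfl⟩ ⟨_, _, h⟩
      exact ha.ne (List.cons.inj h).1.symm
    have hcons : Function.Injective fun p : ℕ × List ℕ => p.1 :: p.2 :=
      fun _ _ h => Prod.ext (List.cons.inj h).1 (List.cons.inj h).2
    have hcons₂ : Function.Injective fun l : List ℕ => k :: k :: l :=
      fun _ _ h => List.cons_injective (List.cons_injective h)
    rw [pellStrings, Finset.card_union_of_disjoint hdisj, Finset.card_image_of_injective _ hcons,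
      Finset.card_image_of_injective _ hcons₂, Finset.card_product, Finset.card_range,
      card_pellStrings k (n + 1), card_pellStrings k n]
    rfl

theorem card_kPell_strings_general (k n : ℕ) :
    Nat.card {l : List ℕ // l.length = n ∧ isPellStr k l = true} = kFib k (n + 1) := by
  calc Nat.card {l : List ℕ // l.length = n ∧ isPellStr k l = true}
      = Nat.card (pellStrings k n) :=
        Nat.card_congr (.subtypeEquivRight fun _ => mem_pellStrings.symm)
    _ = kFib k (n + 1) := by rw [Nat.card_eq_finsetCard, card_pellStrings]

theorem card_kPell_strings (k n : ℕ) (hk : 2 ≤ k) :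
    Nat.card {l : List ℕ // l.length = n ∧ isPellStr k l = true} = kFib k (n + 1) :=
  card_kPell_strings_general k n
end

section
/- For k≥2, the set of k-Pell strings of length n+2 decomposes as the disjoint union of j·(k-Pell strings of length n+1) for j ∈ {0,…,k-1} together with kk·(k-Pell strings of length n). Consequently the counts P(n) = |{k-Pell strings of length n}| satisfy P(n+2) = k·P(n+1) + P(n), with P(0)=1 and P(1)=k. -/
section isPellStr

variable {k : ℕ}

theorem isPellStr_cons_of_lt {j : ℕ} (hj : j < k) (t : List ℕ) :
    isPellStr k (j :: t) = isPellStr k t := by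
  cases t <;> simp [isPellStr, hj, hj.ne]

theorem isPellStr_cons_cons_self (t : List ℕ) : isPellStr k (k :: k :: t) = isPellStr k t := by
  simp [isPellStr]

theorem isPellStr_cons_cons_iff {a b : ℕ} {t : List ℕ} :
    isPellStr k (a :: b :: t) = true ↔
      (a < k ∧ isPellStr k (b :: t) = true) ∨ (a = k ∧ b = k ∧ isPellStr k t = true) := by
  by_cases ha : a = k
  · subst ha
    simp [isPellStr]
  · simp [isPellStr, ha]

theorem isPellStr_length_add_two_iff (n : ℕ) (l : List ℕ) :
    (l.length = n + 2 ∧ isPellStr k l = true) ↔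
      ((∃ j, j < k ∧ ∃ t, t.length = n + 1 ∧ isPellStr k t = true ∧ l = j :: t) ∨
        (∃ t, t.length = n ∧ isPellStr k t = true ∧ l = k :: k :: t)) := by
  constructor
  · rintro ⟨hlen, hl⟩
    obtain ⟨a, b, t, rfl⟩ : ∃ a b t, l = a :: b :: t := by
      rcases l with _ | ⟨a, _ | ⟨b, t⟩⟩ <;> simp_all
    rcases isPellStr_cons_cons_iff.mp hl with ⟨ha, ht⟩ | ⟨rfl, rfl, ht⟩
    · exact .inl ⟨a, ha, b :: t, by simpa using hlen, ht, rfl⟩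
    · exact .inr ⟨t, by simpa using hlen, ht, rfl⟩
  · rintro (⟨j, hj, t, hlen, ht, rfl⟩ | ⟨t, hlen, ht, rfl⟩)
    · exact ⟨by simp [hlen], by rwa [isPellStr_cons_of_lt hj]⟩
    · exact ⟨by simp [hlen], by rwa [isPellStr_cons_cons_self]⟩

end isPellStr

abbrev PellString (k n : ℕ) : Type := {l : List ℕ // l.length = n ∧ isPellStr k l = true}

namespace PellString

def zeroEquiv (k : ℕ) : PellString k 0 ≃ Unit where
  toFun _ := ()
  invFun _ := ⟨[], rfl, rfl⟩
  left_inv := fun ⟨l, hl, _⟩ => Subtype.ext (List.length_eq_zero_iff.mp hl).symm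

noncomputable def oneEquiv (k : ℕ) : PellString k 1 ≃ Fin k :=
  .symm <| .ofBijective (fun j => ⟨[j.1], rfl, by simp [isPellStr]⟩) <| by
    constructor
    · intro i j hij
      simpa [Fin.ext_iff] using congrArg Subtype.val hij
    · rintro ⟨l, hl, hP⟩
      obtain ⟨a, rfl⟩ := List.length_eq_one_iff.mp hl
      exact ⟨⟨a, by simpa [isPellStr] using hP⟩, rfl⟩

noncomputable def sumEquiv (k n : ℕ) :
    (Fin k × PellString k (n + 1)) ⊕ PellString k n ≃ PellString k (n + 2) :=
  .ofBijective
    (Sum.elim (fun p => ⟨p.1.1 :: p.2.1, (isPellStr_length_add_two_iff n _).mpr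
        (.inl ⟨p.1.1, p.1.2, p.2.1, p.2.2.1, p.2.2.2, rfl⟩)⟩)
      (fun t => ⟨k :: k :: t.1, (isPellStr_length_add_two_iff n _).mpr
        (.inr ⟨t.1, t.2.1, t.2.2, rfl⟩)⟩)) <| by
    constructor
    · rintro (⟨j, t⟩ | t) (⟨j', t'⟩ | t') h <;>
        simp only [Sum.elim_inl, Sum.elim_inr, Subtype.mk.injEq, List.cons.injEq] at h
      · rw [Fin.ext h.1, Subtype.ext h.2]
      · exact absurd h.1 j.2.ne
      · exact absurd h.1.symm j'.2.ne
      · rw [Subtype.ext h.2.2]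
    · rintro ⟨l, hl⟩
      rcases (isPellStr_length_add_two_iff n l).mp hl with
        ⟨j, hj, t, hlen, ht, rfl⟩ | ⟨t, hlen, ht, rfl⟩
      · exact ⟨.inl (⟨j, hj⟩, ⟨t, hlen, ht⟩), rfl⟩
      · exact ⟨.inr ⟨t, hlen, ht⟩, rfl⟩

instance finite (k : ℕ) : ∀ n, Finite (PellString k n)
  | 0 => .of_equiv _ (zeroEquiv k).symm
  | 1 => .of_equiv _ (oneEquiv k).symm
  | n + 2 =>
    have := finite k n
    have := finite k (n + 1)
    .of_equiv _ (sumEquiv k n)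

theorem card_add_two (k n : ℕ) :
    Nat.card (PellString k (n + 2)) = k * Nat.card (PellString k (n + 1)) + Nat.card (PellString k n) := by
  rw [← Nat.card_congr (sumEquiv k n), Nat.card_sum, Nat.card_prod, Nat.card_fin]

end PellString

theorem kPell_strings_decomposition_general (k : ℕ) :
    (∀ (n : ℕ) (l : List ℕ),
      (l.length = n + 2 ∧ isPellStr k l = true) ↔
        ((∃ j, j < k ∧ ∃ t, t.length = n + 1 ∧ isPellStr k t = true ∧ l = j :: t) ∨
          (∃ t, t.length = n ∧ isPellStr k t = true ∧ l = k :: k :: t))) ∧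
    (∀ n, Nat.card {l : List ℕ // l.length = n + 2 ∧ isPellStr k l = true} =
        k * Nat.card {l : List ℕ // l.length = n + 1 ∧ isPellStr k l = true} +
          Nat.card {l : List ℕ // l.length = n ∧ isPellStr k l = true}) ∧
    Nat.card {l : List ℕ // l.length = 0 ∧ isPellStr k l = true} = 1 ∧
    Nat.card {l : List ℕ // l.length = 1 ∧ isPellStr k l = true} = k :=
  ⟨isPellStr_length_add_two_iff, PellString.card_add_two k,
    (Nat.card_congr (PellString.zeroEquiv k)).trans Nat.card_unique,
    (Nat.card_congr (PellString.oneEquiv k)).trans (Nat.card_fin k)⟩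

theorem kPell_strings_decomposition (k : ℕ) (hk : 2 ≤ k) :
    (∀ (n : ℕ) (l : List ℕ),
      (l.length = n + 2 ∧ isPellStr k l = true) ↔
        ((∃ j, j < k ∧ ∃ t, t.length = n + 1 ∧ isPellStr k t = true ∧ l = j :: t) ∨
          (∃ t, t.length = n ∧ isPellStr k t = true ∧ l = k :: k :: t))) ∧
    (∀ n, Nat.card {l : List ℕ // l.length = n + 2 ∧ isPellStr k l = true} =
        k * Nat.card {l : List ℕ // l.length = n + 1 ∧ isPellStr k l = true} +
          Nat.card {l : List ℕ // l.length = n ∧ isPellStr k l = true}) ∧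
    Nat.card {l : List ℕ // l.length = 0 ∧ isPellStr k l = true} = 1 ∧
    Nat.card {l : List ℕ // l.length = 1 ∧ isPellStr k l = true} = k :=
  kPell_strings_decomposition_general k
end

section
/- Let E(n) denote the number of edges of the k-Pell graph Π(n,k), satisfying E(0)=0, E(1)=k-1, and E(n)=k·E(n-1)+E(n-2)+F(n+1,k)-F(n,k) for n≥2, where F(n,k) are the k-Fibonacci numbers. Then the generating function satisfies (1-kt-t²)² · ∑_{n≥0} E(n)·tⁿ = (k-1+t)·t as formal power series. -/
noncomputable def kPellE (k : ℕ) : ℕ → ℚ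
  | 0 => 0
  | 1 => (k : ℚ) - 1
  | n + 2 => (k : ℚ) * kPellE k (n + 1) + kPellE k n
      + (kFib k (n + 3) : ℚ) - (kFib k (n + 2) : ℚ)

/-!
With `P = 1 - kX - X²` and `F = ∑ F(n,k) Xⁿ`, the Fibonacci recurrence gives `P F = X`, and the
recurrence for `E` says that `P E` is the generating function of the forcing term
`F(n+1,k) - F(n,k)` minus its constant term `1`; in a form free of division,
`X (P E) = (1 - X) F - X`. Multiplying by `P` and cancelling `X` gives
`P² E = (k - 1 + X) X`.
-/

open PowerSeries

section QuadraticFactor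

variable {R : Type*} [CommRing R] (c : R) (φ : R⟦X⟧)

lemma coeff_zero_one_sub_C_mul_X_sub_X_sq_mul :
    coeff 0 ((1 - C c * X - X ^ 2) * φ) = coeff 0 φ := by
  simp [sub_mul, mul_assoc, coeff_zero_eq_constantCoeff]

lemma coeff_one_one_sub_C_mul_X_sub_X_sq_mul :
    coeff 1 ((1 - C c * X - X ^ 2) * φ) = coeff 1 φ - c * coeff 0 φ := by
  simp [sub_mul, mul_assoc, pow_two, coeff_succ_X_mul, coeff_zero_eq_constantCoeff]

lemma coeff_add_two_one_sub_C_mul_X_sub_X_sq_mul (n : ℕ) :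
    coeff (n + 2) ((1 - C c * X - X ^ 2) * φ) =
      coeff (n + 2) φ - c * coeff (n + 1) φ - coeff n φ := by
  simp [sub_mul, mul_assoc, coeff_succ_X_mul, coeff_X_pow_mul]

end QuadraticFactor

lemma one_sub_C_mul_X_sub_X_sq_mul_kFib (k : ℕ) :
    (1 - C (k : ℚ) * X - X ^ 2) * mk (fun n => (kFib k n : ℚ)) = X := by
  ext (_ | _ | n)
  · rw [coeff_zero_one_sub_C_mul_X_sub_X_sq_mul]; simp [kFib]
  · rw [coeff_one_one_sub_C_mul_X_sub_X_sq_mul]; simp [kFib]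
  · rw [coeff_add_two_one_sub_C_mul_X_sub_X_sq_mul]; simp [kFib, coeff_X]

lemma X_mul_one_sub_C_mul_X_sub_X_sq_mul_kPellE (k : ℕ) :
    X * ((1 - C (k : ℚ) * X - X ^ 2) * mk (kPellE k)) =
      (1 - X) * mk (fun n => (kFib k n : ℚ)) - X := by
  rw [sub_mul (1 : ℚ⟦X⟧), one_mul]
  ext (_ | _ | _ | n)
  · simp [coeff_zero_eq_constantCoeff, kFib]
  · rw [coeff_succ_X_mul, coeff_zero_one_sub_C_mul_X_sub_X_sq_mul]
    simp [coeff_succ_X_mul, kPellE, kFib]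
  · rw [coeff_succ_X_mul, coeff_one_one_sub_C_mul_X_sub_X_sq_mul]
    simp [coeff_succ_X_mul, coeff_X, kPellE, kFib]
  · rw [coeff_succ_X_mul, coeff_add_two_one_sub_C_mul_X_sub_X_sq_mul]
    simp [coeff_succ_X_mul, coeff_X, kPellE]
    ring_nf

theorem kPellE_generating_function_general (k : ℕ) :
    (1 - (k : PowerSeries ℚ) * PowerSeries.X - PowerSeries.X ^ 2) ^ 2 *
      PowerSeries.mk (fun n => kPellE k n) =
      ((k : PowerSeries ℚ) - 1 + PowerSeries.X) * PowerSeries.X := by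
  set P : ℚ⟦X⟧ := 1 - C (k : ℚ) * X - X ^ 2 with hP
  rw [← map_natCast (C (R := ℚ)) k]
  refine mul_left_cancel₀ (X_ne_zero (R := ℚ)) ?_
  calc X * (P ^ 2 * mk (kPellE k))
      = P * (X * (P * mk (kPellE k))) := by ring
    _ = P * mk (fun n => (kFib k n : ℚ)) * (1 - X) - P * X := by
        rw [X_mul_one_sub_C_mul_X_sub_X_sq_mul_kPellE]; ring
    _ = X * ((C (k : ℚ) - 1 + X) * X) := by
        rw [one_sub_C_mul_X_sub_X_sq_mul_kFib, hP]; ring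

theorem kPellE_generating_function (k : ℕ) (hk : 2 ≤ k) :
    (1 - (k : PowerSeries ℚ) * PowerSeries.X - PowerSeries.X ^ 2) ^ 2 *
      PowerSeries.mk (fun n => kPellE k n) =
      ((k : PowerSeries ℚ) - 1 + PowerSeries.X) * PowerSeries.X :=
  kPellE_generating_function_general k
end

section
/- Let E(n) satisfy E(0)=0, E(1)=k-1, E(n)=k·E(n-1)+E(n-2)+F(n+1,k)-F(n,k) for n≥2, where F(n,k) are the k-Fibonacci numbers. Then E(n) = ∑_{i=0}^{n} F(i,k)·(F(n-i+2,k) - F(n-i+1,k)) for all n≥0. -/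
open Finset

section Convolution

variable {R : Type*} [CommSemiring R] (k : ℕ) (g : ℕ → R)

def kFibConv (n : ℕ) : R :=
  ∑ p ∈ antidiagonal n, (kFib k p.1 : R) * g p.2

theorem kFibConv_zero : kFibConv k g 0 = 0 := by
  simp [kFibConv, kFib]

theorem kFibConv_one : kFibConv k g 1 = g 0 := by
  simp [kFibConv, Nat.sum_antidiagonal_succ, kFib]

theorem kFibConv_succ (n : ℕ) :
    kFibConv k g (n + 1) = ∑ p ∈ antidiagonal n, (kFib k (p.1 + 1) : R) * g p.2 := by
  simp [kFibConv, Nat.sum_antidiagonal_succ (n := n), kFib]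

theorem kFibConv_add_two (n : ℕ) :
    kFibConv k g (n + 2) = k * kFibConv k g (n + 1) + kFibConv k g n + g (n + 1) := by
  have hfib (i : ℕ) : (kFib k (i + 2) : R) = k * kFib k (i + 1) + kFib k i := by
    simp [kFib]
  rw [kFibConv_succ, Nat.sum_antidiagonal_succ, kFibConv_succ, kFibConv]
  simp only [hfib, add_mul, sum_add_distrib, mul_assoc, ← mul_sum, zero_add]
  simp only [kFib, Nat.cast_one, one_mul]
  ring

end Convolution

theorem kPellE_eq_kFibConv (k n : ℕ) :
    kPellE k n = kFibConv k (fun m ↦ (kFib k (m + 2) : ℚ) - kFib k (m + 1)) n := by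
  induction n using Nat.twoStepInduction with
  | zero => simp [kPellE, kFibConv_zero]
  | one => simp [kPellE, kFibConv_one, kFib]
  | more n ih₀ ih₁ =>
    rw [kPellE, kFibConv_add_two, ih₀, ih₁]
    ring

theorem kPellE_closed_form_general (k : ℕ) (n : ℕ) :
    kPellE k n = ∑ i ∈ Finset.range (n + 1),
      (kFib k i : ℚ) * ((kFib k (n - i + 2) : ℚ) - (kFib k (n - i + 1) : ℚ)) := by
  rw [kPellE_eq_kFibConv, kFibConv, Nat.sum_antidiagonal_eq_sum_range_succ_mk]

theorem kPellE_closed_form (k : ℕ) (hk : 2 ≤ k) (n : ℕ) :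
    kPellE k n = ∑ i ∈ Finset.range (n + 1),
      (kFib k i : ℚ) * ((kFib k (n - i + 2) : ℚ) - (kFib k (n - i + 1) : ℚ)) :=
  kPellE_closed_form_general k n
end

section
/- For n≥1 and k≥2, the radius of the k-Pell graph Π(n,k) equals ⌊kn/2⌋. -/
abbrev PellVert (n k : ℕ) := {f : Fin n → Fin (k + 1) // isPellStr k (List.ofFn fun i => (f i : ℕ)) = true}

def pellAdj (k : ℕ) {n : ℕ} (f g : Fin n → Fin (k + 1)) : Prop :=
  (∃ j : Fin n, ((g j : ℕ) = (f j : ℕ) + 1) ∧ ((f j : ℕ) + 1 < k) ∧ ∀ i, i ≠ j → f i = g i) ∨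
  (∃ j j' : Fin n, ((j' : ℕ) = (j : ℕ) + 1) ∧ ((f j : ℕ) = k - 1) ∧ ((f j' : ℕ) = k - 1) ∧
    ((g j : ℕ) = k) ∧ ((g j' : ℕ) = k) ∧ ∀ i, i ≠ j → i ≠ j' → f i = g i)

def kPellGraph (n k : ℕ) : SimpleGraph (PellVert n k) :=
  SimpleGraph.fromRel (fun u v => pellAdj k u.1 v.1)

noncomputable def pellEcc {n k : ℕ} (v : PellVert n k) : ℕ :=
  Finset.univ.sup fun u => (kPellGraph n k).dist v u

noncomputable def pellRadius (n k : ℕ) : ℕ := sInf (Set.range (pellEcc (n := n) (k := k)))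

noncomputable def pellDiam (n k : ℕ) : ℕ := Finset.univ.sup (pellEcc (n := n) (k := k))

def pellCenter (n k : ℕ) : Set (PellVert n k) := {v | pellEcc v = pellRadius n k}

/-!
Upper bound: let `c` be the constant string `⌊k/2⌋`. Moving a letter `a < k` one step towards `k/2`,
or turning the first block `kk` of a string into `(k-1)(k-1)`, keeps the string a Pell string and
lowers `cost` by exactly two; and `cost ≤ 2⌊kn/2⌋` block by block. Hence every vertex is within
`⌊kn/2⌋` of `c`.

Lower bound: fix `v` and call position `i` low if `2 vᵢ < k`. The far vertex `u` sends high letters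
to `0` and low letters to `k-1`, except that an aligned pair `{2m, 2m+1}` of low positions becomes
`kk`. The potential `∑ ψᵢ(fᵢ)`, with `ψᵢ(a) = 2k-1-2a` (and `ψᵢ(k) = 0`) at low `i` and
`ψᵢ(a) = 2 min(a, k-1)` at high `i`, changes by at most two along an edge, is at least
`kn + s - 1` at `v` and equals `s` at `u`, where `s` counts the low positions whose mate is high or
missing. Hence `2 d(v, u) + 1 ≥ kn`.
-/

namespace SimpleGraph

variable {V : Type*} {G : SimpleGraph V} {φ : V → ℕ} {d : ℕ}

theorem Walk.le_add_mul_length (h : ∀ x y, G.Adj x y → φ x ≤ φ y + d) {u v : V}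
    (p : G.Walk u v) : φ u ≤ φ v + d * p.length := by
  induction p with
  | nil => simp
  | cons hadj _ ih =>
    rw [Walk.length_cons, Nat.mul_succ]
    have := h _ _ hadj
    omega

theorem Reachable.le_add_mul_dist (h : ∀ x y, G.Adj x y → φ x ≤ φ y + d) {u v : V}
    (huv : G.Reachable u v) : φ u ≤ φ v + d * G.dist u v := by
  obtain ⟨p, hp⟩ := huv.exists_walk_length_eq_dist
  exact hp ▸ p.le_add_mul_length h

theorem exists_walk_mul_length_le (c : V) (hd : 0 < d)
    (h : ∀ v, v ≠ c → ∃ w, G.Adj v w ∧ φ w + d ≤ φ v) (v : V) :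
    ∃ p : G.Walk v c, d * p.length ≤ φ v := by
  induction hφ : φ v using Nat.strong_induction_on generalizing v with
  | _ N ih =>
    by_cases hv : v = c
    · subst hv
      exact ⟨Walk.nil, by simp⟩
    obtain ⟨w, hvw, hw⟩ := h v hv
    obtain ⟨p, hp⟩ := ih (φ w) (by omega) w rfl
    refine ⟨Walk.cons hvw p, ?_⟩
    rw [Walk.length_cons, Nat.mul_succ]
    omega

end SimpleGraph

theorem Finset.sum_add_sum_eq_of_eqOn_compl {ι M : Type*} [Fintype ι] [DecidableEq ι]
    [AddCommMonoid M] (s : Finset ι) {f g : ι → M} (h : ∀ i ∉ s, f i = g i) :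
    ∑ i, f i + ∑ i ∈ s, g i = ∑ i, g i + ∑ i ∈ s, f i := by
  rw [← sum_compl_add_sum s f, ← sum_compl_add_sum s g,
    sum_congr rfl fun i hi => h i (mem_compl.1 hi), add_right_comm]

namespace PellGraph

/-- The other position of the aligned pair `{2m, 2m + 1}` containing `i`. -/
def pairMate (i : ℕ) : ℕ := i + 1 - 2 * (i % 2)

theorem pairMate_pairMate (i : ℕ) : pairMate (pairMate i) = i := by
  simp only [pairMate]
  omega

/-- Twice the number of moves bringing the letter `a` to `k / 2`; a letter `k` is charged half of
the move `kk → (k-1)(k-1)` it shares with its partner. -/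
def letterCost (k a : ℕ) : ℕ := if a = k then 2 * (k - k / 2) - 1 else 2 * Nat.dist a (k / 2)

inductive PellWord (k : ℕ) : List ℕ → Prop
  | nil : PellWord k []
  | cons_lt {a : ℕ} {l : List ℕ} : a < k → PellWord k l → PellWord k (a :: l)
  | cons_kk {l : List ℕ} : PellWord k l → PellWord k (k :: k :: l)

namespace PellWord

variable {k : ℕ}

theorem of_isPellStr : ∀ {l : List ℕ}, isPellStr k l = true → PellWord k l
  | [], _ => nil
  | [_], h => cons_lt (by simpa [isPellStr] using h) nil
  | a :: b :: l, h => by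
    by_cases ha : a = k
    · subst a
      simp only [isPellStr, if_pos, Bool.and_eq_true, beq_iff_eq] at h
      obtain ⟨hb, h⟩ := h
      subst b
      exact cons_kk (of_isPellStr h)
    · simp only [isPellStr, if_neg ha, Bool.and_eq_true, decide_eq_true_eq] at h
      exact cons_lt h.1 (of_isPellStr h.2)

theorem isPellStr_eq_true {l : List ℕ} (h : PellWord k l) : isPellStr k l = true := by
  induction h with
  | nil => rfl
  | @cons_lt a l ha _ ih =>
    cases l with
    | nil => simp [isPellStr, ha]
    | cons b t => simp [isPellStr, ha.ne, ha, ih]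
  | cons_kk _ ih => simp [isPellStr, ih]

theorem of_forall_lt : ∀ {l : List ℕ}, (∀ a ∈ l, a < k) → PellWord k l
  | [], _ => nil
  | a :: l, h => cons_lt (h a (by simp)) (of_forall_lt fun b hb => h b (by simp [hb]))

theorem set_of_lt {l : List ℕ} (h : PellWord k l) {i a b : ℕ} (hi : l[i]? = some a)
    (ha : a < k) (hb : b < k) : PellWord k (l.set i b) := by
  induction h generalizing i with
  | nil => simp at hi
  | cons_lt hc hl ih =>
    cases i with
    | zero => exact cons_lt hb hl
    | succ i => exact cons_lt hc (ih (by simpa using hi))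
  | cons_kk hl ih =>
    match i, hi with
    | 0, hi | 1, hi =>
      simp only [List.getElem?_cons_zero, List.getElem?_cons_succ, Option.some_inj] at hi
      omega
    | i + 2, hi => exact cons_kk (ih (by simpa using hi))

theorem set_first_pair {l : List ℕ} (h : PellWord k l) {i a : ℕ} (hi : l[i]? = some k)
    (hfirst : ∀ j < i, l[j]? ≠ some k) (ha : a < k) :
    l[i + 1]? = some k ∧ PellWord k ((l.set i a).set (i + 1) a) := by
  induction h generalizing i with
  | nil => simp at hi
  | cons_lt hc hl ih =>
    cases i with
    | zero =>
      simp only [List.getElem?_cons_zero, Option.some_inj] at hi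
      omega
    | succ i =>
      obtain ⟨hk, hw⟩ := ih (by simpa using hi) fun j hj => by simpa using hfirst (j + 1) (by omega)
      exact ⟨by simpa using hk, cons_lt hc hw⟩
  | cons_kk hl ih =>
    cases i with
    | zero => exact ⟨rfl, cons_lt ha (cons_lt ha hl)⟩
    | succ i => exact absurd rfl (hfirst 0 (by omega))

theorem of_pairMate : ∀ {l : List ℕ}, (∀ a ∈ l, a ≤ k) →
    (∀ i, l[i]? = some k → l[pairMate i]? = some k) → PellWord k l
  | [], _, _ => nil
  | [a], hle, hmate => by
    refine cons_lt (lt_of_le_of_ne (hle a (by simp)) fun ha => ?_) nil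
    simpa [pairMate] using hmate 0 (by simp [ha])
  | a :: b :: l, hle, hmate => by
    have hl : PellWord k l := of_pairMate (fun c hc => hle c (by simp [hc])) fun i hi => by
      have : pairMate (i + 2) = pairMate i + 2 := by simp only [pairMate]; omega
      simpa [this] using hmate (i + 2) (by simpa using hi)
    by_cases ha : a = k
    · subst a
      have hb : b = k := by simpa [pairMate] using hmate 0 (by simp)
      subst b
      exact cons_kk hl
    · have hb : b ≠ k := fun hb => ha (by simpa [pairMate] using hmate 1 (by simp [hb]))
      exact cons_lt (lt_of_le_of_ne (hle a (by simp)) ha)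
        (cons_lt (lt_of_le_of_ne (hle b (by simp)) hb) hl)

theorem sum_letterCost_le {l : List ℕ} (h : PellWord k l) :
    (l.map (letterCost k)).sum ≤ 2 * (k * l.length / 2) := by
  induction h with
  | nil => simp
  | @cons_lt a l ha _ ih =>
    have hcost : letterCost k a ≤ 2 * (k / 2) := by
      simp only [letterCost, if_neg ha.ne, Nat.dist]; omega
    have : k * (l.length + 1) = k * l.length + k := by ring
    simp only [List.map_cons, List.sum_cons, List.length_cons, this]
    omega
  | @cons_kk l _ ih =>
    have hcost : letterCost k k ≤ k := by rw [letterCost, if_pos rfl]; omega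
    have : k * (l.length + 1 + 1) = k * l.length + 2 * k := by ring
    simp only [List.map_cons, List.sum_cons, List.length_cons, this]
    omega

end PellWord

open Function

variable {n k : ℕ}

def word (f : Fin n → Fin (k + 1)) : List ℕ := List.ofFn fun i => (f i : ℕ)

theorem getElem?_word (f : Fin n → Fin (k + 1)) (i : ℕ) :
    (word f)[i]? = if h : i < n then some (f ⟨i, h⟩ : ℕ) else none :=
  List.getElem?_ofFn

theorem getElem?_word_fin (f : Fin n → Fin (k + 1)) (i : Fin n) :
    (word f)[(i : ℕ)]? = some (f i : ℕ) := by
  simp [word]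

theorem word_update (f : Fin n → Fin (k + 1)) (j : Fin n) (b : Fin (k + 1)) :
    word (update f j b) = (word f).set j b := by
  apply List.ext_getElem (by simp [word])
  intro i _ _
  simp only [word, List.getElem_set, List.getElem_ofFn]
  by_cases hij : (j : ℕ) = i
  · subst hij
    simp
  · rw [if_neg hij, update_of_ne fun h => hij (by rw [← h])]

theorem pellWord_word (v : PellVert n k) : PellWord k (word v.1) := .of_isPellStr v.2

theorem pellAdj_ne (hk : 0 < k) {f g : Fin n → Fin (k + 1)} (h : pellAdj k f g) : f ≠ g := by
  rintro rfl
  rcases h with ⟨j, hj, -⟩ | ⟨j, -, -, hj, -, hj', -, -⟩ <;> omega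

theorem kPellGraph_adj_of_pellAdj (hk : 0 < k) {x y : PellVert n k} (h : pellAdj k x.1 y.1) :
    (kPellGraph n k).Adj x y :=
  (SimpleGraph.fromRel_adj _ _ _).2 ⟨fun hxy => pellAdj_ne hk h (congrArg Subtype.val hxy), .inl h⟩

def midVertex (n : ℕ) (hk : 0 < k) : PellVert n k :=
  ⟨fun _ => ⟨k / 2, by omega⟩, PellWord.isPellStr_eq_true <| .of_forall_lt fun a ha => by
    simp only [List.ofFn_const, List.mem_replicate] at ha
    omega⟩

def cost (f : Fin n → Fin (k + 1)) : ℕ := ∑ i, letterCost k (f i)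

theorem cost_le (v : PellVert n k) : cost v.1 ≤ 2 * (k * n / 2) := by
  simpa [cost, word, List.map_ofFn, List.sum_ofFn] using (pellWord_word v).sum_letterCost_le

theorem exists_letterCost_add_two {a : ℕ} (hlt : a < k) (hmid : a ≠ k / 2) :
    ∃ b < k, letterCost k b + 2 = letterCost k a ∧ (b = a + 1 ∨ b + 1 = a) := by
  by_cases hup : a < k / 2
  · refine ⟨a + 1, by omega, ?_, .inl rfl⟩
    simp only [letterCost, if_neg hlt.ne, if_neg (by omega : a + 1 ≠ k), Nat.dist]
    omega
  · refine ⟨a - 1, by omega, ?_, .inr (by omega)⟩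
    simp only [letterCost, if_neg hlt.ne, if_neg (by omega : a - 1 ≠ k), Nat.dist]
    omega

theorem exists_adj_cost_add_two_of_lt (v : PellVert n k) (i : Fin n) (hlt : (v.1 i : ℕ) < k)
    (hmid : (v.1 i : ℕ) ≠ k / 2) :
    ∃ w, (kPellGraph n k).Adj v w ∧ cost w.1 + 2 = cost v.1 := by
  obtain ⟨b, hbk, hcost, hstep⟩ := exists_letterCost_add_two hlt hmid
  set f := update v.1 i ⟨b, by omega⟩
  have hf : PellWord k (word f) := by
    rw [word_update]
    exact (pellWord_word v).set_of_lt (getElem?_word_fin _ _) hlt hbk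
  refine ⟨⟨f, hf.isPellStr_eq_true⟩, ?_, ?_⟩
  · have hoff : ∀ j, j ≠ i → v.1 j = f j := fun j hj => by simp [f, hj]
    rcases hstep with hup | hdown
    · exact kPellGraph_adj_of_pellAdj (by omega)
        (.inl ⟨i, by simp [f, hup], by omega, hoff⟩)
    · exact (kPellGraph_adj_of_pellAdj (by omega)
        (.inl ⟨i, by simp [f, hdown], by simp only [f, update_self]; omega,
          fun j hj => (hoff j hj).symm⟩)).symm
  · have key := Finset.sum_add_sum_eq_of_eqOn_compl {i}
      (f := fun j => letterCost k (f j)) (g := fun j => letterCost k (v.1 j))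
      fun j hj => by simp_all [f]
    have hfi : (f i : ℕ) = b := by simp [f]
    simp only [Finset.sum_singleton, hfi] at key
    simp only [cost]
    omega

theorem letterCost_pred_add_one (hk : 0 < k) : letterCost k (k - 1) + 1 = letterCost k k := by
  rw [letterCost, letterCost, if_neg (by omega), if_pos rfl, Nat.dist]
  omega

theorem exists_first_top_pair (v : PellVert n k) (htop : ∃ i : Fin n, (v.1 i : ℕ) = k)
    {a : ℕ} (ha : a < k) :
    ∃ j j' : Fin n, (j' : ℕ) = j + 1 ∧ (v.1 j : ℕ) = k ∧ (v.1 j' : ℕ) = k ∧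
      PellWord k (((word v.1).set j a).set j' a) := by
  classical
  have hex : ∃ i : ℕ, (word v.1)[i]? = some k :=
    let ⟨i, hi⟩ := htop; ⟨i, by rw [getElem?_word_fin, hi]⟩
  obtain ⟨hnext, hw⟩ := (pellWord_word v).set_first_pair (Nat.find_spec hex)
    (fun _ hj => Nat.find_min hex hj) ha
  obtain ⟨h₀, hv₀⟩ : ∃ h : Nat.find hex < n, (v.1 ⟨_, h⟩ : ℕ) = k := by
    simpa [getElem?_word] using Nat.find_spec hex
  obtain ⟨h₁, hv₁⟩ : ∃ h : Nat.find hex + 1 < n, (v.1 ⟨_, h⟩ : ℕ) = k := by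
    simpa [getElem?_word] using hnext
  exact ⟨⟨_, h₀⟩, ⟨_, h₁⟩, rfl, hv₀, hv₁, hw⟩

theorem exists_adj_cost_add_two_of_top (hk : 0 < k) (v : PellVert n k)
    (htop : ∃ i : Fin n, (v.1 i : ℕ) = k) :
    ∃ w, (kPellGraph n k).Adj v w ∧ cost w.1 + 2 = cost v.1 := by
  obtain ⟨j, j', hj', hv₀, hv₁, hw⟩ := exists_first_top_pair v htop (a := k - 1) (by omega)
  have hjj' : j ≠ j' := fun h => by rw [h] at hj'; omega
  set f := update (update v.1 j ⟨k - 1, by omega⟩) j' ⟨k - 1, by omega⟩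
  have hfj : (f j : ℕ) = k - 1 := by simp [f, hjj']
  have hfj' : (f j' : ℕ) = k - 1 := by simp [f]
  have hoff : ∀ i, i ≠ j → i ≠ j' → f i = v.1 i := fun i h h' => by simp [f, h, h']
  have hfw : word f = ((word v.1).set j (k - 1)).set j' (k - 1) := by
    rw [word_update, word_update]
  refine ⟨⟨f, (hfw ▸ hw).isPellStr_eq_true⟩,
    (kPellGraph_adj_of_pellAdj hk (.inr ⟨j, j', hj', hfj, hfj', hv₀, hv₁, hoff⟩)).symm, ?_⟩
  have key := Finset.sum_add_sum_eq_of_eqOn_compl {j, j'}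
    (f := fun i => letterCost k (f i)) (g := fun i => letterCost k (v.1 i)) fun i hi => by
      simp only [Finset.mem_insert, Finset.mem_singleton, not_or] at hi
      rw [hoff i hi.1 hi.2]
  simp only [Finset.sum_pair hjj', hfj, hfj', hv₀, hv₁] at key
  have := letterCost_pred_add_one hk
  simp only [cost]
  omega

theorem exists_adj_cost_add_two (hk : 0 < k) (v : PellVert n k) (hv : v ≠ midVertex n hk) :
    ∃ w, (kPellGraph n k).Adj v w ∧ cost w.1 + 2 = cost v.1 := by
  obtain ⟨i, hi⟩ : ∃ i, (v.1 i : ℕ) ≠ k / 2 := by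
    by_contra! h
    exact hv (Subtype.ext (funext fun i => Fin.ext (h i)))
  rcases (Nat.lt_succ_iff.1 (v.1 i).isLt).lt_or_eq with hlt | htop
  · exact exists_adj_cost_add_two_of_lt v i hlt hi
  · exact exists_adj_cost_add_two_of_top hk v ⟨i, htop⟩

theorem exists_walk_two_mul_length_le (hk : 0 < k) (v : PellVert n k) :
    ∃ p : (kPellGraph n k).Walk v (midVertex n hk), 2 * p.length ≤ cost v.1 :=
  SimpleGraph.exists_walk_mul_length_le _ two_pos
    (fun v hv => (exists_adj_cost_add_two hk v hv).imp fun _ h => ⟨h.1, h.2.le⟩) v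

theorem kPellGraph_reachable (hk : 0 < k) (u v : PellVert n k) : (kPellGraph n k).Reachable u v :=
  let ⟨p, _⟩ := exists_walk_two_mul_length_le hk u
  let ⟨q, _⟩ := exists_walk_two_mul_length_le hk v
  ⟨p.append q.reverse⟩

theorem pellEcc_midVertex_le (hk : 0 < k) : pellEcc (midVertex n hk) ≤ k * n / 2 := by
  refine Finset.sup_le fun v _ => ?_
  obtain ⟨p, hp⟩ := exists_walk_two_mul_length_le hk v
  have := SimpleGraph.dist_le p.reverse
  have := cost_le v
  rw [SimpleGraph.Walk.length_reverse] at *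
  omega

def letterPotential (k : ℕ) (low : Prop) [Decidable low] (a : ℕ) : ℕ :=
  if low then (if a = k then 0 else 2 * k - 1 - 2 * a) else 2 * min a (k - 1)

theorem letterPotential_succ (low : Prop) [Decidable low] {a : ℕ} (h : a + 1 < k) :
    letterPotential k low a ≤ letterPotential k low (a + 1) + 2 ∧
      letterPotential k low (a + 1) ≤ letterPotential k low a + 2 := by
  unfold letterPotential
  split_ifs <;> omega

theorem letterPotential_top (low : Prop) [Decidable low] (hk : 0 < k) :
    letterPotential k low (k - 1) ≤ letterPotential k low k + 1 ∧
      letterPotential k low k ≤ letterPotential k low (k - 1) + 1 := by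
  unfold letterPotential
  split_ifs <;> omega

def potential (v f : Fin n → Fin (k + 1)) : ℕ :=
  ∑ i, letterPotential k (2 * (v i : ℕ) < k) (f i)

theorem potential_le_of_pellAdj (hk : 0 < k) (v : Fin n → Fin (k + 1))
    {f g : Fin n → Fin (k + 1)} (h : pellAdj k f g) :
    potential v f ≤ potential v g + 2 ∧ potential v g ≤ potential v f + 2 := by
  classical
  unfold potential
  rcases h with ⟨j, hgj, hlt, hoff⟩ | ⟨j, j', hj', hfj, hfj', hgj, hgj', hoff⟩
  · have key := Finset.sum_add_sum_eq_of_eqOn_compl {j}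
      (f := fun i => letterPotential k (2 * (v i : ℕ) < k) (f i))
      (g := fun i => letterPotential k (2 * (v i : ℕ) < k) (g i))
      fun i hi => by rw [hoff i (by simpa using hi)]
    have hstep := letterPotential_succ (2 * (v j : ℕ) < k) hlt
    simp only [Finset.sum_singleton, hgj] at key
    omega
  · have hjj' : j ≠ j' := fun h => by rw [h] at hj'; omega
    have key := Finset.sum_add_sum_eq_of_eqOn_compl {j, j'}
      (f := fun i => letterPotential k (2 * (v i : ℕ) < k) (f i))
      (g := fun i => letterPotential k (2 * (v i : ℕ) < k) (g i))
      fun i hi => by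
        simp only [Finset.mem_insert, Finset.mem_singleton, not_or] at hi
        rw [hoff i hi.1 hi.2]
    have hstep := letterPotential_top (2 * (v j : ℕ) < k) hk
    have hstep' := letterPotential_top (2 * (v j' : ℕ) < k) hk
    simp only [Finset.sum_pair hjj', hfj, hfj', hgj, hgj'] at key
    omega

theorem potential_le_of_adj (hk : 0 < k) (v : Fin n → Fin (k + 1)) {x y : PellVert n k}
    (h : (kPellGraph n k).Adj x y) : potential v x.1 ≤ potential v y.1 + 2 := by
  rcases ((SimpleGraph.fromRel_adj _ _ _).1 h).2 with h | h
  · exact (potential_le_of_pellAdj hk v h).1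
  · exact (potential_le_of_pellAdj hk v h).2

def IsLow (v : Fin n → Fin (k + 1)) (j : ℕ) : Prop := ∃ h : j < n, 2 * (v ⟨j, h⟩ : ℕ) < k

instance (v : Fin n → Fin (k + 1)) : DecidablePred (IsLow v) :=
  fun _ => inferInstanceAs (Decidable (∃ _ : _ < n, _))

theorem isLow_fin {v : Fin n → Fin (k + 1)} {i : Fin n} : IsLow v i ↔ 2 * (v i : ℕ) < k :=
  ⟨fun ⟨_, h⟩ => h, fun h => ⟨i.2, h⟩⟩

def farVertex (v : Fin n → Fin (k + 1)) : Fin n → Fin (k + 1) := fun i =>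
  if IsLow v i ∧ IsLow v (pairMate i) then Fin.last k
  else if IsLow v i then ⟨k - 1, by omega⟩ else 0

theorem farVertex_eq_top_iff (hk : 0 < k) {v : Fin n → Fin (k + 1)} {i : Fin n} :
    (farVertex v i : ℕ) = k ↔ IsLow v i ∧ IsLow v (pairMate i) := by
  unfold farVertex
  split_ifs <;> simp_all <;> omega

theorem pellWord_farVertex (hk : 0 < k) (v : Fin n → Fin (k + 1)) :
    PellWord k (word (farVertex v)) := by
  refine .of_pairMate (by simp [word, Fin.is_le]) fun i hi => ?_
  rw [getElem?_word] at hi ⊢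
  split_ifs at hi with hin
  obtain ⟨hlow, hmate⟩ := (farVertex_eq_top_iff hk (i := ⟨i, hin⟩)).1 (by simpa using hi)
  have hmn : pairMate i < n := hmate.fst
  rw [dif_pos hmn, (farVertex_eq_top_iff hk).2 ⟨hmate, by rwa [pairMate_pairMate]⟩]

def farPellVertex (hk : 0 < k) (v : Fin n → Fin (k + 1)) : PellVert n k :=
  ⟨farVertex v, (pellWord_farVertex hk v).isPellStr_eq_true⟩

open Finset

def singles (v : Fin n → Fin (k + 1)) : Finset (Fin n) :=
  univ.filter fun i => IsLow v i ∧ ¬IsLow v (pairMate i)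

theorem potential_farVertex (hk : 0 < k) (v : Fin n → Fin (k + 1)) :
    potential v (farVertex v) = #(singles v) := by
  rw [singles, card_filter]
  refine sum_congr rfl fun i _ => ?_
  unfold farVertex letterPotential
  simp only [isLow_fin] at *
  split_ifs <;> simp_all <;> omega

theorem card_singles_le_low (v : Fin n → Fin (k + 1)) :
    #(singles v) ≤ #(univ.filter fun i => 2 * (v i : ℕ) < k) :=
  card_le_card fun i hi => by
    simp only [singles, mem_filter, isLow_fin] at hi ⊢
    exact ⟨hi.1, hi.2.1⟩

theorem card_singles_le_high_add_one (v : Fin n → Fin (k + 1)) :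
    #(singles v) ≤ #(univ.filter fun i => ¬2 * (v i : ℕ) < k) + 1 := by
  set high := univ.filter fun i => ¬2 * (v i : ℕ) < k
  calc #(singles v) ≤ #(insert n (high.map Fin.valEmbedding)) := by
        refine card_le_card_of_injOn (fun i => pairMate i) (fun i hi => ?_) fun i _ j _ hij => ?_
        · simp only [singles, coe_filter, Set.mem_ofPred_eq, mem_univ, true_and] at hi
          simp only [coe_insert, coe_map, Set.mem_insert_iff, Set.mem_image, mem_coe, high,
            mem_filter, mem_univ, true_and, Fin.valEmbedding_apply]
          by_cases hmn : pairMate i < n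
          · exact .inr ⟨⟨_, hmn⟩, fun h => hi.2 ⟨hmn, h⟩, rfl⟩
          · left
            have := i.2
            simp only [pairMate] at hmn ⊢
            omega
        · have := congrArg pairMate hij
          simp only [pairMate_pairMate] at this
          exact Fin.ext this
    _ ≤ #high + 1 := by
        rw [← card_map Fin.valEmbedding]
        exact card_insert_le _ _

theorem mul_add_card_le_potential_self (v : Fin n → Fin (k + 1)) (p : Fin n → Prop)
    [DecidablePred p]
    (h : ∀ i, k + (if p i then 1 else 0) ≤ letterPotential k (2 * (v i : ℕ) < k) (v i)) :
    k * n + #(univ.filter p) ≤ potential v v := by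
  have := sum_le_sum fun i (_ : i ∈ univ) => h i
  rw [sum_add_distrib, sum_const, sum_boole, card_univ, Fintype.card_fin, smul_eq_mul,
    Nat.cast_id, mul_comm] at this
  exact this

theorem mul_add_card_singles_le_potential_self (hk : 2 ≤ k) (v : Fin n → Fin (k + 1)) :
    k * n + #(singles v) ≤ potential v v + 1 := by
  rcases Nat.even_or_odd k with ⟨r, hr⟩ | ⟨r, hr⟩
  · have := mul_add_card_le_potential_self v (fun i => 2 * (v i : ℕ) < k) fun i => by
      unfold letterPotential
      split_ifs <;> omega
    have := card_singles_le_low v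
    omega
  · have := mul_add_card_le_potential_self v (fun i => ¬2 * (v i : ℕ) < k) fun i => by
      unfold letterPotential
      split_ifs <;> omega
    have := card_singles_le_high_add_one v
    omega

theorem mul_le_two_mul_dist_farPellVertex_add_one (hk : 2 ≤ k) (v : PellVert n k) :
    k * n ≤ 2 * (kPellGraph n k).dist v (farPellVertex (by omega) v.1) + 1 := by
  have hk₀ : 0 < k := by omega
  have hlip := (kPellGraph_reachable hk₀ v (farPellVertex hk₀ v.1)).le_add_mul_dist
    fun x y => potential_le_of_adj hk₀ v.1 (x := x) (y := y)
  have hfar : potential v.1 (farPellVertex hk₀ v.1).1 = #(singles v.1) :=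
    potential_farVertex hk₀ v.1
  have hself := mul_add_card_singles_le_potential_self hk v.1
  omega

theorem le_pellEcc (hk : 2 ≤ k) (v : PellVert n k) : k * n / 2 ≤ pellEcc v := by
  have := mul_le_two_mul_dist_farPellVertex_add_one hk v
  calc k * n / 2 ≤ (kPellGraph n k).dist v (farPellVertex (by omega) v.1) := by omega
    _ ≤ pellEcc v := le_sup (f := (kPellGraph n k).dist v) (mem_univ _)

end PellGraph

theorem kPellGraph_radius_general (n k : ℕ) (hk : 2 ≤ k) :
    pellRadius n k = k * n / 2 := by
  have hk₀ : 0 < k := by omega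
  have hmid := Set.mem_range_self (f := pellEcc) (PellGraph.midVertex n hk₀)
  apply le_antisymm
  · exact (Nat.sInf_le hmid).trans (PellGraph.pellEcc_midVertex_le hk₀)
  · exact le_csInf ⟨_, hmid⟩ (Set.forall_mem_range.2 (PellGraph.le_pellEcc hk))

theorem kPellGraph_radius (n k : ℕ) (hn : 1 ≤ n) (hk : 2 ≤ k) :
    pellRadius n k = k * n / 2 :=
  kPellGraph_radius_general n k hk
end

section
/- For n odd, the number of binary strings of length n over {a,b} that start and end with a, contain no factor bb, and in which every maximal run of a's has odd length, equals 2^{(n-1)/2}. -/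
/-!
In such a word the b's are isolated and flanked by odd runs of a's, so after its first letter it
splits into pairs: it is `a c₁ a c₂ a … c_k a` with every `cᵢ ∈ {a, b}`. Conversely every word of
this shape qualifies, since merging the a's between consecutive b's gives runs of odd length
`2j + 1`. Peeling off two letters at a time, words of length `2k + 1` are thus in bijection with
the `2^k` choices of `c₁, …, c_k`.
-/

namespace OddRunWord

variable {α : Type*}

section Runs

def AllRunsOdd (a : α) (l : List α) : Prop :=
  ∀ (p q : List α) (m : ℕ), 0 < m → l = p ++ List.replicate m a ++ q →
    p.getLast? ≠ some a → q.head? ≠ some a → Odd m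

variable {a x : α} {p l : List α}

theorem getLast?_ne_of_cons_getLast?_ne (h : (x :: p).getLast? ≠ some a) :
    p.getLast? ≠ some a := by
  cases p with
  | nil => simp
  | cons y p => rwa [List.getLast?_cons_cons] at h

theorem getLast?_cons_ne_of_ne (hx : x ≠ a) (hp : p.getLast? ≠ some a) :
    (x :: p).getLast? ≠ some a := by
  cases p with
  | nil => simpa using hx
  | cons y p => rwa [List.getLast?_cons_cons]

theorem allRunsOdd_nil : AllRunsOdd a [] := by
  intro p q m hm h
  have := congrArg List.length h
  simp at this
  omega

theorem allRunsOdd_cons_iff_of_ne (hx : x ≠ a) : AllRunsOdd a (x :: l) ↔ AllRunsOdd a l := by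
  constructor
  · intro h p q m hm hl hp hq
    exact h (x :: p) q m hm (by simp [hl]) (getLast?_cons_ne_of_ne hx hp) hq
  · intro h p q m hm hl hp hq
    cases p with
    | nil =>
      obtain ⟨m, rfl⟩ := Nat.exists_eq_succ_of_ne_zero hm.ne'
      simp only [List.nil_append, List.replicate_succ, List.cons_append, List.cons.injEq] at hl
      exact absurd hl.1 hx
    | cons y p =>
      simp only [List.cons_append, List.cons.injEq] at hl
      exact h p q m hm hl.2 (getLast?_ne_of_cons_getLast?_ne hp) hq

theorem allRunsOdd_cons_iff_of_head?_ne (hl : l.head? ≠ some a) :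
    AllRunsOdd a (x :: l) ↔ AllRunsOdd a l := by
  constructor
  · intro h p q m hm hlpq hp hq
    refine h (x :: p) q m hm (by simp [hlpq]) ?_ hq
    cases p with
    | nil =>
      obtain ⟨m, rfl⟩ := Nat.exists_eq_succ_of_ne_zero hm.ne'
      simp [hlpq, List.replicate_succ] at hl
    | cons y p => rwa [List.getLast?_cons_cons]
  · intro h p q m hm hlpq hp hq
    cases p with
    | nil =>
      obtain ⟨_ | m, rfl⟩ := Nat.exists_eq_succ_of_ne_zero hm.ne'
      · exact odd_one
      · simp only [List.nil_append, List.replicate_succ, List.cons_append, List.cons.injEq] at hlpq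
        simp [hlpq.2] at hl
    | cons y p =>
      simp only [List.cons_append, List.cons.injEq] at hlpq
      exact h p q m hm hlpq.2 (getLast?_ne_of_cons_getLast?_ne hp) hq

theorem allRunsOdd_cons_cons_iff (hl : l.head? = some a) :
    AllRunsOdd a (a :: a :: l) ↔ AllRunsOdd a l := by
  constructor
  · intro h p q m hm hlpq hp hq
    cases p with
    | nil =>
      have := h [] q (m + 2) (by omega) (by simp [hlpq, List.replicate_succ]) (by simp) hq
      exact (Nat.odd_add.mp this).mpr even_two
    | cons y p =>
      exact h (a :: a :: y :: p) q m hm (by simp [hlpq])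
        (by rwa [List.getLast?_cons_cons, List.getLast?_cons_cons]) hq
  · intro h p q m hm hlpq hp hq
    match p, m with
    | [], 1 => exact odd_one
    | [], 2 => simp_all [List.replicate_succ]
    | [], m + 3 =>
      simp only [List.nil_append, List.replicate_succ, List.cons_append, List.cons.injEq] at hlpq
      have := h [] q (m + 1) (by omega) (by simp [hlpq, List.replicate_succ]) (by simp) hq
      exact this.add_even even_two
    | [y], _ => simp_all
    | y :: z :: p, _ =>
      simp only [List.cons_append, List.cons.injEq] at hlpq
      exact h p q _ hm hlpq.2.2 (getLast?_ne_of_cons_getLast?_ne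
        (getLast?_ne_of_cons_getLast?_ne hp)) hq

theorem not_allRunsOdd_cons_cons (hl : l.head? ≠ some a) : ¬ AllRunsOdd a (a :: a :: l) :=
  fun h => absurd (h [] l 2 two_pos rfl (by simp) hl) (by decide)

end Runs

theorem pair_infix_cons_iff {x y z : α} {l : List α} :
    [y, z] <:+: x :: l ↔ (y = x ∧ l.head? = some z) ∨ [y, z] <:+: l := by
  rw [List.infix_cons_iff, List.cons_prefix_cons]
  cases l <;> simp [@eq_comm _ z]

section Words

variable {a b c : α} {w : List α}

def IsOddRunWord (a b : α) (l : List α) : Prop :=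
  (∀ x ∈ l, x = a ∨ x = b) ∧ l.head? = some a ∧ l.getLast? = some a ∧ ¬ ([b, b] <:+: l) ∧
    AllRunsOdd a l

theorem isOddRunWord_singleton : IsOddRunWord a b [a] :=
  ⟨by simp, rfl, rfl, fun h => by simpa using h.length_le,
    (allRunsOdd_cons_iff_of_head?_ne (by simp)).2 allRunsOdd_nil⟩

theorem IsOddRunWord.cons_cons (hab : a ≠ b) (hc : c = a ∨ c = b) (hw : IsOddRunWord a b w) :
    IsOddRunWord a b (a :: c :: w) := by
  obtain ⟨hmem, hhead, hlast, hbb, hruns⟩ := hw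
  obtain ⟨w, rfl⟩ : ∃ w', w = a :: w' := by
    cases w <;> simp_all
  refine ⟨?_, rfl, by rwa [List.getLast?_cons_cons, List.getLast?_cons_cons], ?_, ?_⟩
  · simp only [List.forall_mem_cons] at hmem ⊢
    exact ⟨hmem.1, hc, hmem⟩
  · simp [pair_infix_cons_iff, hab, hab.symm, hbb]
  · rcases hc with rfl | rfl
    · exact (allRunsOdd_cons_cons_iff rfl).2 hruns
    · rwa [allRunsOdd_cons_iff_of_head?_ne (by simpa using hab.symm),
        allRunsOdd_cons_iff_of_ne hab.symm]

theorem IsOddRunWord.of_cons_cons (hab : a ≠ b) (h : IsOddRunWord a b (a :: c :: w)) :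
    (c = a ∨ c = b) ∧ IsOddRunWord a b w := by
  obtain ⟨hmem, -, hlast, hbb, hruns⟩ := h
  have hc : c = a ∨ c = b := hmem c (by simp)
  have hhead : w.head? = some a := by
    rcases hc with rfl | rfl
    · by_contra hne
      exact not_allRunsOdd_cons_cons hne hruns
    · cases w with
      | nil => simp_all [eq_comm]
      | cons z w =>
        rcases hmem z (by simp) with rfl | rfl
        · rfl
        · exact absurd ⟨[a], w, rfl⟩ hbb
  obtain ⟨w, rfl⟩ : ∃ w', w = a :: w' := by
    cases w <;> simp_all
  refine ⟨hc, fun x hx => hmem x (by simp [hx]), rfl,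
    by rwa [List.getLast?_cons_cons, List.getLast?_cons_cons] at hlast,
    fun h => hbb (h.trans (List.suffix_append [a, c] _).isInfix), ?_⟩
  rcases hc with rfl | rfl
  · exact (allRunsOdd_cons_cons_iff rfl).1 hruns
  · rwa [allRunsOdd_cons_iff_of_head?_ne (by simpa using hab.symm),
      allRunsOdd_cons_iff_of_ne hab.symm] at hruns

def wordOfBits (a b : α) : List Bool → List α
  | [] => [a]
  | c :: t => a :: (if c then a else b) :: wordOfBits a b t

theorem length_wordOfBits (L : List Bool) : (wordOfBits a b L).length = 2 * L.length + 1 := by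
  induction L with
  | nil => rfl
  | cons c t ih => simp only [wordOfBits, List.length_cons, ih]; ring

theorem wordOfBits_injective (hab : a ≠ b) : Function.Injective (wordOfBits a b) := by
  intro L₁
  induction L₁ with
  | nil => rintro (_ | _) h <;> simp_all [wordOfBits]
  | cons c t ih =>
    rintro (_ | ⟨c', t'⟩) h
    · simp [wordOfBits] at h
    · simp only [wordOfBits, List.cons.injEq, true_and] at h
      obtain ⟨hc, ht⟩ := h
      rw [ih ht, show c = c' by cases c <;> cases c' <;> simp_all [eq_comm]]

theorem isOddRunWord_wordOfBits (hab : a ≠ b) (L : List Bool) :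
    IsOddRunWord a b (wordOfBits a b L) := by
  induction L with
  | nil => exact isOddRunWord_singleton
  | cons c t ih => exact ih.cons_cons hab (by cases c <;> simp)

theorem IsOddRunWord.exists_wordOfBits (hab : a ≠ b) :
    ∀ {w : List α}, IsOddRunWord a b w → ∃ L, wordOfBits a b L = w
  | [], h => by simp [IsOddRunWord] at h
  | [x], h => ⟨[], by simpa [IsOddRunWord, wordOfBits, eq_comm] using h.2.1⟩
  | x :: c :: w, h => by
    have hx : x = a := by simpa using h.2.1
    subst x
    obtain ⟨hc, hw⟩ := h.of_cons_cons hab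
    obtain ⟨L, rfl⟩ := hw.exists_wordOfBits hab
    rcases hc with rfl | rfl
    · exact ⟨true :: L, rfl⟩
    · exact ⟨false :: L, rfl⟩

theorem setOf_isOddRunWord_length_eq (hab : a ≠ b) (k : ℕ) :
    {w : List α | w.length = 2 * k + 1 ∧ IsOddRunWord a b w} =
      wordOfBits a b '' {L | L.length = k} := by
  ext w
  constructor
  · rintro ⟨hlen, hw⟩
    obtain ⟨L, rfl⟩ := hw.exists_wordOfBits hab
    exact ⟨L, by simpa [length_wordOfBits] using hlen, rfl⟩
  · rintro ⟨L, rfl, rfl⟩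
    exact ⟨length_wordOfBits _, isOddRunWord_wordOfBits hab L⟩

end Words

end OddRunWord

open OddRunWord in
theorem count_odd_run_words (a b : ℕ) (hab : a ≠ b) (n : ℕ) (hn : Odd n) :
    Nat.card {l : List ℕ // l.length = n ∧ (∀ x ∈ l, x = a ∨ x = b) ∧
        l.head? = some a ∧ l.getLast? = some a ∧ ¬ ([b, b] <:+: l) ∧
        ∀ (p q : List ℕ) (m : ℕ), 0 < m → l = p ++ List.replicate m a ++ q →
          p.getLast? ≠ some a → q.head? ≠ some a → Odd m} =
      2 ^ ((n - 1) / 2) := by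
  obtain ⟨k, rfl⟩ := hn
  change Nat.card {w : List ℕ | w.length = 2 * k + 1 ∧ IsOddRunWord a b w} = _
  rw [setOf_isOddRunWord_length_eq hab, Nat.card_image_of_injective (wordOfBits_injective hab)]
  change Nat.card (List.Vector Bool k) = _
  simp [Nat.card_eq_fintype_card, card_vector]
end

section
/- For n≥1 and k≥3, the degree of a vertex t in the k-Pell graph Π(n,k) equals |t|₀ + 2·∑_{i=1}^{k-1} |t|ᵢ + (1/2)|t|ₖ − r, where |t|ᵢ is the number of occurrences of letter i in t and r is the number of maximal runs of the letter k−1 in t. -/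
instance pellAdjDec (k n : ℕ) (f g : Fin n → Fin (k + 1)) : Decidable (pellAdj k f g) := by
  unfold pellAdj; infer_instance

instance kPellGraphAdjDec (n k : ℕ) : DecidableRel (kPellGraph n k).Adj := fun u v => by
  have : (kPellGraph n k).Adj u v ↔ u ≠ v ∧ (pellAdj k u.1 v.1 ∨ pellAdj k v.1 u.1) :=
    SimpleGraph.fromRel_adj _ u v
  exact decidable_of_iff _ this.symm

/-!
A `k`-Pell string factors uniquely into letters `0, …, k-1` and blocks `kk`, and a prefix of a
Pell string is Pell exactly when it ends at a cut point of this factorisation. Changing a letter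
below `k` into another letter below `k` therefore never affects the Pell property, turning a
factor `(k-1)(k-1)` into `kk` preserves it, and turning `kk` back into `(k-1)(k-1)` preserves it
exactly when the `kk` is a block of the factorisation. So the neighbours of `t` come from four
kinds of moves: raising one of the `|t|₀ + ⋯ + |t|_{k-2}` letters below `k - 1`, lowering one of
the `|t|₁ + ⋯ + |t|_{k-1}` letters in `1, …, k-1`, merging one of the `|t|_{k-1} - r` adjacent
pairs of letters `k - 1`, and splitting one of the `|t|_k / 2` blocks `kk`. The moves change the
letter sum by `+1, -1, +2, -2`, so distinct moves give distinct neighbours.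
-/

open Finset

namespace KPell

theorem card_filter_eq_card_of_injOn {α β : Type*} [Fintype β] [DecidableEq β] {P : β → Prop}
    [DecidablePred P] {s : Finset α} {F : α → β} (hF : Set.InjOn F s)
    (hP : ∀ b, P b ↔ ∃ a ∈ s, F a = b) : #{b | P b} = #s := by
  rw [← card_image_of_injOn hF]
  congr 1
  ext b
  simp [hP]

theorem injOn_update {ι α : Type*} [DecidableEq ι] (f c : ι → α) :
    Set.InjOn (fun j => Function.update f j (c j)) {j | c j ≠ f j} := by
  intro j hj j' _ h
  by_contra hne
  have := congrFun h j
  simp only [Function.update_self, Function.update_of_ne hne] at this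
  exact hj this

theorem card_filter_fin_eq_card_filter_range {n : ℕ} (p : ℕ → Prop) [DecidablePred p] :
    #{j : Fin n | p j} = #{j ∈ range n | p j} := by
  simp only [card_filter]
  exact Fin.sum_univ_eq_sum_range (fun j => if p j then 1 else 0) n

theorem card_filter_runStart_add_card_filter_hasSucc {n : ℕ} {α : Type*} [DecidableEq α]
    (f : Fin n → α) (a : α) :
    #{i | f i = a ∧ ∀ j : Fin n, (j : ℕ) + 1 = i → f j ≠ a} +
        #{j | f j = a ∧ ∃ j' : Fin n, (j' : ℕ) = j + 1 ∧ f j' = a} = #{i | f i = a} := by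
  have hshift : #{j | f j = a ∧ ∃ j' : Fin n, (j' : ℕ) = j + 1 ∧ f j' = a} =
      #{i | f i = a ∧ ¬∀ j : Fin n, (j : ℕ) + 1 = i → f j ≠ a} := by
    refine card_bij (fun j hj => ⟨j + 1, ?_⟩) (fun j hj => ?_) (fun _ _ _ _ h => ?_) fun i hi => ?_
    · obtain ⟨j', hj', -⟩ := (mem_filter.1 hj).2.2
      omega
    · obtain ⟨hj, j', hj', hj'a⟩ := (mem_filter.1 hj).2
      simp only [mem_filter, mem_univ, true_and, not_forall, not_not]
      exact ⟨by rwa [show j' = ⟨j + 1, _⟩ from Fin.ext hj'] at hj'a, j, rfl, hj⟩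
    · exact Fin.ext (by simpa using h)
    · simp only [mem_filter, mem_univ, true_and, not_forall, not_not] at hi
      obtain ⟨hi, j, hj, hja⟩ := hi
      exact ⟨j, by simp only [mem_filter, mem_univ, true_and]; exact ⟨hja, i, hj.symm, hi⟩,
        Fin.ext (by simp [hj])⟩
  rw [hshift, ← filter_filter, ← filter_filter, card_filter_add_card_filter_not]

theorem sum_range_add_eq_add_sum_Icc (g : ℕ → ℕ) (m : ℕ) :
    ∑ a ∈ range m, g a + g m = g 0 + ∑ a ∈ Icc 1 m, g a := by
  rw [← sum_range_succ, range_eq_Ico, sum_eq_sum_Ico_succ_bot m.succ_pos, zero_add,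
    Nat.succ_eq_add_one, Ico_add_one_right_eq_Icc]

variable {k : ℕ}

theorem isPellStr_cons_of_lt {a : ℕ} (ha : a < k) : ∀ l, isPellStr k (a :: l) = isPellStr k l
  | [] => by simp [isPellStr, ha]
  | _ :: _ => by simp [isPellStr, ha.ne, ha]

theorem isPellStr_cons_cons_self (l : List ℕ) : isPellStr k (k :: k :: l) = isPellStr k l := by
  simp [isPellStr]

theorem isPellStr_append_cons_of_lt {a : ℕ} (ha : a < k) (l₁ l₂ : List ℕ) :
    isPellStr k (l₁ ++ a :: l₂) = (isPellStr k l₁ && isPellStr k l₂) := by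
  induction l₁ using isPellStr.induct k with
  | case1 => simp [isPellStr, isPellStr_cons_of_lt ha]
  | case2 x => by_cases hx : x = k <;> simp [isPellStr, hx, ha.ne, isPellStr_cons_of_lt ha]
  | case3 b rest ih => simp [isPellStr, ih, Bool.and_assoc]
  | case4 x b rest hx ih =>
    simp only [List.cons_append] at ih
    simp [isPellStr, hx, ih, Bool.and_assoc]

theorem isPellStr_append_of_isPellStr {l₁ : List ℕ} (h : isPellStr k l₁) (l₂ : List ℕ) :
    isPellStr k (l₁ ++ l₂) = isPellStr k l₂ := by
  induction l₁ using isPellStr.induct k with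
  | case1 => rfl
  | case2 x => simp_all [isPellStr, isPellStr_cons_of_lt]
  | case3 b rest ih => by_cases hb : b = k <;> simp_all [isPellStr]
  | case4 x b rest hx ih => simp_all [isPellStr, isPellStr_cons_of_lt]

theorem isPellStr_append_pred_pair (hk : 1 ≤ k) (l₁ l₂ : List ℕ) :
    isPellStr k (l₁ ++ (k - 1) :: (k - 1) :: l₂) =
      (isPellStr k l₁ && isPellStr k (l₁ ++ k :: k :: l₂)) := by
  have hlt : k - 1 < k := by omega
  cases h : isPellStr k l₁
  · simp [isPellStr_append_cons_of_lt hlt, h]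
  · simp [isPellStr_append_cons_of_lt hlt, isPellStr_cons_of_lt hlt, h,
      isPellStr_append_of_isPellStr h, isPellStr_cons_cons_self]

theorem two_mul_card_filter_blockStart_eq_count {l : List ℕ} (hl : isPellStr k l) :
    2 * #{j ∈ range l.length | l[j]? = some k ∧ l[j + 1]? = some k ∧ isPellStr k (l.take j)} =
      l.count k := by
  induction l using isPellStr.induct k with
  | case1 => simp
  | case2 x =>
    have hx : x < k := by simpa [isPellStr] using hl
    simp [hx.ne]
  | case3 b rest ih =>
    obtain ⟨hb, hrest⟩ : b = k ∧ isPellStr k rest := by simpa [isPellStr] using hl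
    subst b
    rw [List.count_cons_self, List.count_cons_self, ← ih hrest, card_filter, card_filter,
      List.length_cons, List.length_cons, sum_range_succ', sum_range_succ']
    simp [isPellStr, isPellStr_cons_cons_self]
    ring
  | case4 x b rest hx ih =>
    obtain ⟨hlt, hrest⟩ : x < k ∧ isPellStr k (b :: rest) := by simpa [isPellStr, hx] using hl
    rw [List.count_cons_of_ne hx, ← ih hrest, card_filter, card_filter,
      List.length_cons, sum_range_succ']
    simp [hx, isPellStr_cons_of_lt hlt]

variable {n : ℕ}

def word (f : Fin n → Fin (k + 1)) : List ℕ := List.ofFn fun i => (f i : ℕ)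

@[simp] theorem length_word (f : Fin n → Fin (k + 1)) : (word f).length = n := by simp [word]

theorem getElem?_word_eq_some_iff {f : Fin n → Fin (k + 1)} {m a : ℕ} :
    (word f)[m]? = some a ↔ ∃ i : Fin n, (i : ℕ) = m ∧ (f i : ℕ) = a := by
  simp only [word, List.getElem?_ofFn, Option.dite_none_right_eq_some, Option.some.injEq]
  exact ⟨fun ⟨h, hf⟩ => ⟨⟨m, h⟩, rfl, hf⟩, fun ⟨i, hi, hf⟩ => ⟨hi ▸ i.isLt, by subst hi; exact hf⟩⟩

theorem count_word (f : Fin n → Fin (k + 1)) (a : ℕ) :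
    (word f).count a = #{j | (f j : ℕ) = a} := by
  have := Fin.card_filter_univ_eq_vector_get_eq_count a (List.Vector.ofFn fun i => (f i : ℕ))
  simpa [word] using this.symm

theorem card_filter_mem_eq_sum_count (f : Fin n → Fin (k + 1)) (s : Finset ℕ) :
    #{j | (f j : ℕ) ∈ s} = ∑ a ∈ s, (word f).count a := by
  rw [card_eq_sum_card_fiberwise (f := fun j => (f j : ℕ)) (t := s)
    fun j hj => by simpa using hj]
  refine sum_congr rfl fun a ha => ?_
  rw [count_word, filter_filter]
  congr 1
  ext j
  simp only [mem_filter, mem_univ, true_and, and_iff_right_iff_imp]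
  rintro rfl
  exact ha

theorem card_filter_add_one_lt (f : Fin n → Fin (k + 1)) :
    #{j | (f j : ℕ) + 1 < k} = ∑ a ∈ range (k - 1), (word f).count a := by
  rw [← card_filter_mem_eq_sum_count]
  congr 1
  ext j
  simp only [mem_filter, mem_univ, true_and, mem_range]
  omega

theorem card_filter_pos_lt (f : Fin n → Fin (k + 1)) :
    #{j | 0 < (f j : ℕ) ∧ (f j : ℕ) < k} = ∑ a ∈ Icc 1 (k - 1), (word f).count a := by
  rw [← card_filter_mem_eq_sum_count]
  congr 1
  ext j
  simp only [mem_filter, mem_univ, true_and, mem_Icc]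
  omega

theorem two_mul_card_filter_blockStart_word_eq_count {v : Fin n → Fin (k + 1)}
    (hv : isPellStr k (word v)) :
    2 * #{j | ((v j : ℕ) = k ∧ ∃ j' : Fin n, (j' : ℕ) = j + 1 ∧ (v j' : ℕ) = k) ∧
      isPellStr k ((word v).take j)} = (word v).count k := by
  rw [← two_mul_card_filter_blockStart_eq_count hv, length_word,
    ← card_filter_fin_eq_card_filter_range]
  congr 2
  ext j
  simp only [mem_filter, mem_univ, true_and, getElem?_word_eq_some_iff, Fin.val_inj,
    exists_eq_left, and_assoc]

theorem drop_word_eq_cons (f : Fin n → Fin (k + 1)) (j : Fin n) :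
    (word f).drop j = (f j : ℕ) :: (word f).drop (j + 1) := by
  rw [List.drop_eq_getElem_cons (by simp)]
  simp [word]

theorem word_eq_take_append_cons (f : Fin n → Fin (k + 1)) (j : Fin n) :
    word f = (word f).take j ++ (f j : ℕ) :: (word f).drop (j + 1) := by
  conv_lhs => rw [← List.take_append_drop j (word f), drop_word_eq_cons]

theorem word_eq_take_append_cons_cons (f : Fin n → Fin (k + 1)) {j j' : Fin n}
    (hj : (j' : ℕ) = j + 1) :
    word f = (word f).take j ++ (f j : ℕ) :: (f j' : ℕ) :: (word f).drop (j' + 1) := by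
  conv_lhs => rw [word_eq_take_append_cons f j, ← hj, drop_word_eq_cons]

theorem take_word_congr {f g : Fin n → Fin (k + 1)} {m : ℕ}
    (h : ∀ i : Fin n, (i : ℕ) < m → f i = g i) : (word f).take m = (word g).take m := by
  apply List.ext_getElem (by simp)
  intro i hi _
  simp only [List.length_take, length_word, lt_min_iff] at hi
  simp [word, h ⟨i, hi.2⟩ hi.1]

theorem drop_word_congr {f g : Fin n → Fin (k + 1)} {m : ℕ}
    (h : ∀ i : Fin n, m ≤ (i : ℕ) → f i = g i) : (word f).drop m = (word g).drop m := by
  apply List.ext_getElem (by simp)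
  intro i hi _
  simp only [List.length_drop, length_word] at hi
  simp [word, h ⟨m + i, by omega⟩ (by simp)]

theorem isPellStr_word_eq_of_lt {f g : Fin n → Fin (k + 1)} (j : Fin n) (hf : (f j : ℕ) < k)
    (hg : (g j : ℕ) < k) (h : ∀ i, i ≠ j → f i = g i) :
    isPellStr k (word f) = isPellStr k (word g) := by
  rw [word_eq_take_append_cons f j, word_eq_take_append_cons g j, isPellStr_append_cons_of_lt hf,
    isPellStr_append_cons_of_lt hg, take_word_congr (g := g), drop_word_congr (g := g)]
  · exact fun i hi => h i fun e => by subst e; omega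
  · exact fun i hi => h i fun e => by subst e; omega

theorem isPellStr_word_eq_of_pair (hk : 1 ≤ k) {f g : Fin n → Fin (k + 1)} {j j' : Fin n}
    (hj : (j' : ℕ) = j + 1) (hf : (f j : ℕ) = k - 1) (hf' : (f j' : ℕ) = k - 1)
    (hg : (g j : ℕ) = k) (hg' : (g j' : ℕ) = k) (h : ∀ i, i ≠ j → i ≠ j' → f i = g i) :
    isPellStr k (word f) = (isPellStr k ((word g).take j) && isPellStr k (word g)) := by
  have hpre : (word f).take j = (word g).take j :=
    take_word_congr fun i hi => h i (fun e => by subst e; omega) (fun e => by subst e; omega)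
  have hsuf : (word f).drop (j' + 1) = (word g).drop (j' + 1) :=
    drop_word_congr fun i hi => h i (fun e => by subst e; omega) (fun e => by subst e; omega)
  have ef := word_eq_take_append_cons_cons f hj
  have eg := word_eq_take_append_cons_cons g hj
  rw [hf, hf', hpre, hsuf] at ef
  rw [hg, hg'] at eg
  rw [ef, isPellStr_append_pred_pair hk, ← eg]

def IsSingleStep (k : ℕ) (f g : Fin n → Fin (k + 1)) : Prop :=
  ∃ j : Fin n, ((g j : ℕ) = (f j : ℕ) + 1) ∧ ((f j : ℕ) + 1 < k) ∧ ∀ i, i ≠ j → f i = g i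

def IsPairStep (k : ℕ) (f g : Fin n → Fin (k + 1)) : Prop :=
  ∃ j j' : Fin n, ((j' : ℕ) = (j : ℕ) + 1) ∧ ((f j : ℕ) = k - 1) ∧ ((f j' : ℕ) = k - 1) ∧
    ((g j : ℕ) = k) ∧ ((g j' : ℕ) = k) ∧ ∀ i, i ≠ j → i ≠ j' → f i = g i

theorem pellAdj_iff {f g : Fin n → Fin (k + 1)} :
    pellAdj k f g ↔ IsSingleStep k f g ∨ IsPairStep k f g := Iff.rfl

theorem sum_val_of_isSingleStep {f g : Fin n → Fin (k + 1)} (h : IsSingleStep k f g) :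
    ∑ i, (g i : ℕ) = ∑ i, (f i : ℕ) + 1 := by
  obtain ⟨j, hj, -, hne⟩ := h
  have hpt : ∀ i, (g i : ℕ) = f i + if i = j then 1 else 0 := fun i => by
    by_cases hi : i = j
    · subst hi; simp [hj]
    · simp [hi, hne i hi]
  simp [hpt, sum_add_distrib]

theorem sum_val_of_isPairStep (hk : 1 ≤ k) {f g : Fin n → Fin (k + 1)} (h : IsPairStep k f g) :
    ∑ i, (g i : ℕ) = ∑ i, (f i : ℕ) + 2 := by
  obtain ⟨j, j', hj, hf, hf', hg, hg', hne⟩ := h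
  have hjj' : j ≠ j' := fun e => by subst e; omega
  have hpt : ∀ i, (g i : ℕ) = f i + ((if i = j then 1 else 0) + if i = j' then 1 else 0) :=
    fun i => by
      by_cases hi : i = j
      · subst hi; simp [hjj']; omega
      by_cases hi' : i = j'
      · subst hi'; simp [hi]; omega
      simp [hi, hi', hne i hi hi']
  simp [hpt, sum_add_distrib]

theorem ne_of_pellAdj (hk : 1 ≤ k) {f g : Fin n → Fin (k + 1)} (h : pellAdj k f g) : f ≠ g := by
  rintro rfl
  rcases h with h | h
  · have := sum_val_of_isSingleStep h; omega
  · have := sum_val_of_isPairStep hk h; omega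

theorem isSingleStep_iff_exists_update {f g : Fin n → Fin (k + 1)} :
    IsSingleStep k f g ↔ ∃ j, (f j : ℕ) + 1 < k ∧ Function.update f j (f j + 1) = g := by
  refine exists_congr fun j => ?_
  rw [Function.update_eq_iff, Fin.ext_iff]
  constructor
  · rintro ⟨hg, hlt, hne⟩
    exact ⟨hlt, by rw [hg, Fin.val_add_one_of_lt' (by omega)], hne⟩
  · rintro ⟨hlt, hg, hne⟩
    exact ⟨by rw [← hg, Fin.val_add_one_of_lt' (by omega)], hlt, hne⟩

theorem isSingleStep_swap_iff_exists_update {f g : Fin n → Fin (k + 1)} :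
    IsSingleStep k g f ↔
      ∃ j, (0 < (f j : ℕ) ∧ (f j : ℕ) < k) ∧ Function.update f j (f j - 1) = g := by
  refine exists_congr fun j => ?_
  rw [Function.update_eq_iff, Fin.ext_iff]
  constructor
  · rintro ⟨hf, hlt, hne⟩
    refine ⟨by omega, ?_, fun i hi => (hne i hi).symm⟩
    rw [Fin.val_sub_one_of_ne_zero fun h => by simp [h] at hf]
    omega
  · rintro ⟨hlt, hg, hne⟩
    rw [Fin.val_sub_one_of_ne_zero fun h => by simp [h] at hlt] at hg
    exact ⟨by omega, by omega, fun i hi => (hne i hi).symm⟩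

def pairUpdate {α : Type*} (f : Fin n → α) (j : Fin n) (c : α) : Fin n → α :=
  fun i => if i = j ∨ (i : ℕ) = j + 1 then c else f i

theorem pairUpdate_eq_iff {α : Type*} {f g : Fin n → α} {j j' : Fin n} (hj : (j' : ℕ) = j + 1)
    {c : α} : pairUpdate f j c = g ↔ g j = c ∧ g j' = c ∧ ∀ i, i ≠ j → i ≠ j' → f i = g i := by
  have hj' : ∀ i : Fin n, (i : ℕ) = j + 1 ↔ i = j' := fun i => by rw [Fin.ext_iff, hj]
  constructor
  · rintro rfl
    exact ⟨by simp [pairUpdate], by simp [pairUpdate, hj],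
      fun i hi hi' => by simp [pairUpdate, hi, hj', hi']⟩
  · rintro ⟨hg, hg', hne⟩
    funext i
    by_cases hi : i = j
    · simp [pairUpdate, hi, hg]
    by_cases hi' : i = j'
    · simp [pairUpdate, hi', hj, hg']
    simp [pairUpdate, hi, hj', hi', hne i hi hi']

theorem injOn_pairUpdate {α : Type*} (f : Fin n → α) (c : α) :
    Set.InjOn (fun j => pairUpdate f j c) {j | c ≠ f j} := by
  intro j hj j' hj' h
  by_contra hne
  have e₁ : (j : ℕ) = j' + 1 := by
    by_contra e
    have := congrFun h j
    simp [pairUpdate, hne, e] at this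
    exact hj this
  have e₂ : (j' : ℕ) = j + 1 := by
    by_contra e
    have := congrFun h j'
    simp [pairUpdate, Ne.symm hne, e] at this
    exact hj' this.symm
  omega

theorem isPairStep_iff_exists_pairUpdate {f g : Fin n → Fin (k + 1)} :
    IsPairStep k f g ↔
      ∃ j, ((f j : ℕ) = k - 1 ∧ ∃ j' : Fin n, (j' : ℕ) = j + 1 ∧ (f j' : ℕ) = k - 1) ∧
        pairUpdate f j (Fin.last k) = g := by
  constructor
  · rintro ⟨j, j', hj, hf, hf', hg, hg', hne⟩
    exact ⟨j, ⟨hf, j', hj, hf'⟩, (pairUpdate_eq_iff hj).2 ⟨Fin.ext hg, Fin.ext hg', hne⟩⟩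
  · rintro ⟨j, ⟨hf, j', hj, hf'⟩, hg⟩
    obtain ⟨hg, hg', hne⟩ := (pairUpdate_eq_iff hj).1 hg
    exact ⟨j, j', hj, hf, hf', by simp [hg], by simp [hg'], hne⟩

theorem isPairStep_swap_iff_exists_pairUpdate {f g : Fin n → Fin (k + 1)} :
    IsPairStep k g f ↔
      ∃ j, ((f j : ℕ) = k ∧ ∃ j' : Fin n, (j' : ℕ) = j + 1 ∧ (f j' : ℕ) = k) ∧
        pairUpdate f j ⟨k - 1, by omega⟩ = g := by
  constructor
  · rintro ⟨j, j', hj, hg, hg', hf, hf', hne⟩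
    exact ⟨j, ⟨hf, j', hj, hf'⟩,
      (pairUpdate_eq_iff hj).2 ⟨Fin.ext hg, Fin.ext hg', fun i hi hi' => (hne i hi hi').symm⟩⟩
  · rintro ⟨j, ⟨hf, j', hj, hf'⟩, hg⟩
    obtain ⟨hg, hg', hne⟩ := (pairUpdate_eq_iff hj).1 hg
    exact ⟨j, j', hj, by simp [hg], by simp [hg'], hf, hf', fun i hi hi' => (hne i hi hi').symm⟩

section Neighbors

open scoped Classical

variable {v : Fin n → Fin (k + 1)}

theorem card_filter_isSingleStep (hv : isPellStr k (word v)) :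
    #{g | isPellStr k (word g) ∧ IsSingleStep k v g} = #{j | (v j : ℕ) + 1 < k} := by
  refine card_filter_eq_card_of_injOn ((injOn_update v fun j => v j + 1).mono fun j hj => ?_)
    fun g => ?_
  · simp only [coe_filter, mem_univ, true_and, Set.mem_ofPred_eq] at hj
    simp only [Set.mem_ofPred_eq, ne_eq, Fin.ext_iff,
      Fin.val_add_one_of_lt' (by omega : (v j : ℕ) + 1 < k + 1)]
    omega
  simp only [isSingleStep_iff_exists_update, mem_filter, mem_univ, true_and]
  refine ⟨fun ⟨_, h⟩ => h, ?_⟩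
  rintro ⟨j, hj, rfl⟩
  refine ⟨?_, j, hj, rfl⟩
  rw [← isPellStr_word_eq_of_lt j (by omega) _ fun i hi => (Function.update_of_ne hi _ _).symm]
  · exact hv
  · simp [Fin.val_add_one_of_lt' (by omega : (v j : ℕ) + 1 < k + 1), hj]

theorem card_filter_isSingleStep_swap (hv : isPellStr k (word v)) :
    #{g | isPellStr k (word g) ∧ IsSingleStep k g v} = #{j | 0 < (v j : ℕ) ∧ (v j : ℕ) < k} := by
  refine card_filter_eq_card_of_injOn ((injOn_update v fun j => v j - 1).mono fun j hj => ?_)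
    fun g => ?_
  · simp only [coe_filter, mem_univ, true_and, Set.mem_ofPred_eq] at hj
    simp only [Set.mem_ofPred_eq, ne_eq, Fin.ext_iff,
      Fin.val_sub_one_of_ne_zero (fun h => by simp [h] at hj : v j ≠ 0)]
    omega
  simp only [isSingleStep_swap_iff_exists_update, mem_filter, mem_univ, true_and]
  refine ⟨fun ⟨_, h⟩ => h, ?_⟩
  rintro ⟨j, hj, rfl⟩
  refine ⟨?_, j, hj, rfl⟩
  rw [← isPellStr_word_eq_of_lt j hj.2 _ fun i hi => (Function.update_of_ne hi _ _).symm]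
  · exact hv
  · simp [Fin.val_sub_one_of_ne_zero (fun h => by simp [h] at hj : v j ≠ 0)]
    omega

theorem card_filter_isPairStep (hk : 1 ≤ k) (hv : isPellStr k (word v)) :
    #{g | isPellStr k (word g) ∧ IsPairStep k v g} =
      #{j | (v j : ℕ) = k - 1 ∧ ∃ j' : Fin n, (j' : ℕ) = j + 1 ∧ (v j' : ℕ) = k - 1} := by
  refine card_filter_eq_card_of_injOn
    ((injOn_pairUpdate v (Fin.last k)).mono fun j hj => ?_) fun g => ?_
  · simp only [coe_filter, mem_univ, true_and, Set.mem_ofPred_eq] at hj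
    simp only [Set.mem_ofPred_eq, ne_eq, Fin.ext_iff, Fin.val_last]
    omega
  simp only [isPairStep_iff_exists_pairUpdate, mem_filter, mem_univ, true_and]
  refine ⟨fun ⟨_, h⟩ => h, ?_⟩
  rintro ⟨j, ⟨hf, j', hj, hf'⟩, rfl⟩
  refine ⟨?_, j, ⟨hf, j', hj, hf'⟩, rfl⟩
  obtain ⟨hg, hg', hne⟩ := (pairUpdate_eq_iff (f := v) (c := Fin.last k) hj).1 rfl
  have := isPellStr_word_eq_of_pair hk hj hf hf' (by simp [hg]) (by simp [hg']) hne
  rw [hv, eq_comm, Bool.and_eq_true] at this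
  exact this.2

theorem card_filter_isPairStep_swap (hk : 1 ≤ k) (hv : isPellStr k (word v)) :
    #{g | isPellStr k (word g) ∧ IsPairStep k g v} =
      #{j | ((v j : ℕ) = k ∧ ∃ j' : Fin n, (j' : ℕ) = j + 1 ∧ (v j' : ℕ) = k) ∧
        isPellStr k ((word v).take j)} := by
  refine card_filter_eq_card_of_injOn
    ((injOn_pairUpdate v ⟨k - 1, by omega⟩).mono fun j hj => ?_) fun g => ?_
  · simp only [coe_filter, mem_univ, true_and, Set.mem_ofPred_eq] at hj
    simp only [Set.mem_ofPred_eq, ne_eq, Fin.ext_iff]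
    omega
  have hpell : ∀ j j' : Fin n, (j' : ℕ) = j + 1 → (v j : ℕ) = k → (v j' : ℕ) = k →
      isPellStr k (word (pairUpdate v j ⟨k - 1, by omega⟩)) = isPellStr k ((word v).take j) := by
    intro j j' hj hf hf'
    obtain ⟨hg, hg', hne⟩ := (pairUpdate_eq_iff (f := v) (c := ⟨k - 1, by omega⟩) hj).1 rfl
    rw [isPellStr_word_eq_of_pair hk hj (by simp [hg]) (by simp [hg']) hf hf'
      fun i hi hi' => (hne i hi hi').symm, hv, Bool.and_true]
  simp only [isPairStep_swap_iff_exists_pairUpdate, mem_filter, mem_univ, true_and]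
  constructor
  · rintro ⟨hg, j, ⟨hf, j', hj, hf'⟩, rfl⟩
    exact ⟨j, ⟨⟨hf, j', hj, hf'⟩, hpell j j' hj hf hf' ▸ hg⟩, rfl⟩
  · rintro ⟨j, ⟨⟨hf, j', hj, hf'⟩, ht⟩, rfl⟩
    exact ⟨hpell j j' hj hf hf' ▸ ht, j, ⟨hf, j', hj, hf'⟩, rfl⟩

theorem degree_eq_card_filter (hk : 1 ≤ k) (v : PellVert n k) :
    (kPellGraph n k).degree v =
      #{g | isPellStr k (word g) ∧ (pellAdj k v.1 g ∨ pellAdj k g v.1)} := by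
  rw [← SimpleGraph.card_neighborFinset_eq_degree, SimpleGraph.neighborFinset_eq_filter]
  refine card_bij (fun w _ => w.1) (fun w hw => ?_) (fun _ _ _ _ => Subtype.ext) fun g hg => ?_
  · simp only [mem_filter, mem_univ, true_and, kPellGraph, SimpleGraph.fromRel_adj] at hw ⊢
    exact ⟨w.2, hw.2⟩
  · simp only [mem_filter, mem_univ, true_and] at hg
    refine ⟨⟨g, hg.1⟩, ?_, rfl⟩
    simp only [mem_filter, mem_univ, true_and, kPellGraph, SimpleGraph.fromRel_adj]
    refine ⟨fun h => ?_, hg.2⟩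
    rcases hg.2 with h' | h'
    · exact ne_of_pellAdj hk h' (congrArg Subtype.val h)
    · exact ne_of_pellAdj hk h' (congrArg Subtype.val h).symm

theorem degree_eq (hk : 1 ≤ k) (v : PellVert n k) :
    (kPellGraph n k).degree v =
      #{j | (v.1 j : ℕ) + 1 < k} +
        #{j | (v.1 j : ℕ) = k - 1 ∧ ∃ j' : Fin n, (j' : ℕ) = j + 1 ∧ (v.1 j' : ℕ) = k - 1} +
        #{j | 0 < (v.1 j : ℕ) ∧ (v.1 j : ℕ) < k} +
        #{j | ((v.1 j : ℕ) = k ∧ ∃ j' : Fin n, (j' : ℕ) = j + 1 ∧ (v.1 j' : ℕ) = k) ∧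
          isPellStr k ((word v.1).take j)} := by
  rw [← card_filter_isSingleStep v.2, ← card_filter_isPairStep hk v.2,
    ← card_filter_isSingleStep_swap v.2, ← card_filter_isPairStep_swap hk v.2,
    degree_eq_card_filter hk]
  simp only [pellAdj_iff, or_assoc, and_or_left, filter_or]
  rw [card_union_of_disjoint, card_union_of_disjoint, card_union_of_disjoint]
  · omega
  -- the four kinds of steps change the letter sum by `+1`, `+2`, `-1` and `-2`
  all_goals
    simp only [disjoint_union_right, disjoint_filter]
    and_intros <;> rintro g - ⟨-, h₁⟩ ⟨-, h₂⟩ <;>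
      (first | have := sum_val_of_isSingleStep h₁ | have := sum_val_of_isPairStep hk h₁) <;>
      (first | have := sum_val_of_isSingleStep h₂ | have := sum_val_of_isPairStep hk h₂) <;> omega

end Neighbors

end KPell

open KPell in
theorem kPellGraph_degree_general (n k : ℕ) (hk : 3 ≤ k) (v : PellVert n k) :
    (kPellGraph n k).degree v +
        Nat.card {i : Fin n // (v.1 i : ℕ) = k - 1 ∧
          ∀ j : Fin n, (j : ℕ) + 1 = (i : ℕ) → (v.1 j : ℕ) ≠ k - 1} =
      (List.ofFn (fun i => (v.1 i : ℕ))).count 0 +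
        2 * ∑ i ∈ Finset.Icc 1 (k - 1), (List.ofFn (fun i => (v.1 i : ℕ))).count i +
        (List.ofFn (fun i => (v.1 i : ℕ))).count k / 2 := by
  have hk₁ : 1 ≤ k := by omega
  have hruns := card_filter_runStart_add_card_filter_hasSucc (fun i => (v.1 i : ℕ)) (k - 1)
  rw [← count_word] at hruns
  have hblocks := two_mul_card_filter_blockStart_word_eq_count v.2
  have hletters := sum_range_add_eq_add_sum_Icc (fun a => (word v.1).count a) (k - 1)
  change _ = (word v.1).count 0 + 2 * ∑ i ∈ Icc 1 (k - 1), (word v.1).count i +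
    (word v.1).count k / 2
  rw [Nat.card_eq_fintype_card, Fintype.card_subtype, degree_eq hk₁, card_filter_add_one_lt,
    card_filter_pos_lt]
  omega

theorem kPellGraph_degree (n k : ℕ) (hn : 1 ≤ n) (hk : 3 ≤ k) (v : PellVert n k) :
    (kPellGraph n k).degree v +
        Nat.card {i : Fin n // (v.1 i : ℕ) = k - 1 ∧
          ∀ j : Fin n, (j : ℕ) + 1 = (i : ℕ) → (v.1 j : ℕ) ≠ k - 1} =
      (List.ofFn (fun i => (v.1 i : ℕ))).count 0 +
        2 * ∑ i ∈ Finset.Icc 1 (k - 1), (List.ofFn (fun i => (v.1 i : ℕ))).count i +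
        (List.ofFn (fun i => (v.1 i : ℕ))).count k / 2 :=
  kPellGraph_degree_general n k hk v
end

section
/- For n≥1 and k≥3, the maximum degree of the k-Pell graph Π(n,k) is 2n and the minimum degree is ⌈n/2⌉. -/
lemma List.foldlM_set_of_forall_eq {m : Type u → Type v} [Monad m] [LawfulMonad m] {α : Type w}
    {β : Type u} {f : β → α → m β} {l : List α} {j : ℕ} (hj : j < l.length) {c : α}
    (h : ∀ b, f b l[j] = f b c) (b : β) : (l.set j c).foldlM f b = l.foldlM f b := by
  conv_rhs => rw [← List.take_append_drop j l, List.drop_eq_getElem_cons hj]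
  simp only [List.set_eq_take_append_cons_drop, if_pos hj, List.foldlM_append, List.foldlM_cons, h]

def pellStep (k : ℕ) : Bool → ℕ → Option Bool
  | false, a => if a = k then some true else if a < k then some false else none
  | true, a => if a = k then some false else none

def pellState (k : ℕ) (l : List ℕ) : Option Bool :=
  l.foldlM (pellStep k) false

section Automaton

variable {k : ℕ}

@[simp] lemma pellStep_false_self : pellStep k false k = some true := by simp [pellStep]

@[simp] lemma pellStep_true_self : pellStep k true k = some false := by simp [pellStep]

lemma pellStep_of_lt {a : ℕ} (ha : a < k) (s : Bool) :
    pellStep k s a = if s then none else some false := by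
  cases s <;> simp [pellStep, ha, ha.ne]

lemma pellStep_true_of_ne {a : ℕ} (ha : a ≠ k) : pellStep k true a = none := by
  simp [pellStep, ha]

lemma pellStep_eq_some_true {s : Bool} {a : ℕ} (h : pellStep k s a = some true) :
    s = false ∧ a = k := by
  cases s <;> simp only [pellStep] at h <;> split_ifs at h <;> simp_all

theorem isPellStr_iff_pellState (l : List ℕ) :
    isPellStr k l = true ↔ pellState k l = some false := by
  induction l using isPellStr.induct k with
  | case1 => simp [isPellStr, pellState]
  | case2 a =>
    rcases lt_trichotomy a k with h | rfl | h
    · simp [isPellStr, pellState, pellStep_of_lt h, h]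
    · simp [isPellStr, pellState]
    · simp [isPellStr, pellState, pellStep, h.ne', h.not_gt]
  | case3 b rest ih =>
    rcases eq_or_ne b k with rfl | hb
    · simpa [isPellStr, pellState] using ih
    · simp [isPellStr, pellState, pellStep_true_of_ne hb, hb]
  | case4 a b rest ha ih =>
    rcases lt_or_gt_of_ne ha with h | h
    · simpa [isPellStr, pellState, ha, h, pellStep_of_lt h] using ih
    · simp [isPellStr, pellState, pellStep, ha, h.not_gt]

lemma foldlM_pellStep_of_forall_lt {l : List ℕ} (h : ∀ a ∈ l, a < k) :
    l.foldlM (pellStep k) false = some false := by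
  induction l with
  | nil => rfl
  | cons a l ih =>
    simp [pellStep_of_lt (h a List.mem_cons_self), ih fun b hb => h b (List.mem_cons_of_mem _ hb)]

lemma foldlM_pellStep_replicate_two_mul (m : ℕ) (s : Bool) :
    (List.replicate (2 * m) k).foldlM (pellStep k) s = some s := by
  induction m with
  | zero => rfl
  | succ m ih => cases s <;> simp [Nat.mul_succ, List.replicate_succ, ih]

lemma pellState_eq_bind (l : List ℕ) (j : ℕ) :
    pellState k l = (pellState k (l.take j)).bind ((l.drop j).foldlM (pellStep k)) := by
  conv_lhs => rw [← List.take_append_drop j l]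
  exact List.foldlM_append

lemma pellState_take_succ {l : List ℕ} {j : ℕ} (hj : j < l.length) :
    pellState k (l.take (j + 1)) = (pellState k (l.take j)).bind (pellStep k · l[j]) := by
  rw [pellState, pellState, ← List.take_concat_get' l j hj, List.foldlM_append]
  simp only [List.foldlM_cons, List.foldlM_nil, bind_pure]
  rfl

end Automaton

section PellWords

variable {k : ℕ} {l : List ℕ}

lemma isPellStr_set_of_lt (hl : isPellStr k l = true) {j : ℕ} (hj : j < l.length)
    (hlt : l[j] < k) {c : ℕ} (hc : c < k) : isPellStr k (l.set j c) = true := by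
  rw [isPellStr_iff_pellState] at hl ⊢
  rwa [pellState, List.foldlM_set_of_forall_eq hj
    (fun s => by rw [pellStep_of_lt hlt, pellStep_of_lt hc])]

lemma exists_pellState_take (hl : isPellStr k l = true) (j : ℕ) :
    ∃ s, pellState k (l.take j) = some s := by
  rw [isPellStr_iff_pellState, pellState_eq_bind l j] at hl
  obtain ⟨s, hs, -⟩ := Option.bind_eq_some_iff.mp hl
  exact ⟨s, hs⟩

lemma getElem_eq_of_pellState_take_eq_true (hl : isPellStr k l = true) {j : ℕ}
    (h : pellState k (l.take j) = some true) : ∃ hj : j < l.length, l[j] = k := by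
  rw [isPellStr_iff_pellState, pellState_eq_bind l j, h, Option.bind_some] at hl
  by_cases hj : j < l.length
  · refine ⟨hj, by_contra fun hne => ?_⟩
    rw [List.drop_eq_getElem_cons hj, List.foldlM_cons, pellStep_true_of_ne hne] at hl
    simp at hl
  · simp [List.drop_eq_nil_of_le (not_lt.mp hj)] at hl

lemma exists_block_of_getElem_eq (hl : isPellStr k l = true) {j : ℕ} (hj : j < l.length)
    (hk : l[j] = k) :
    ∃ i, (i = j ∨ i + 1 = j) ∧ pellState k (l.take i) = some false ∧
      ∃ hi : i + 1 < l.length, l[i] = k ∧ l[i + 1] = k := by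
  obtain ⟨s, hs⟩ := exists_pellState_take hl j
  cases s
  · have hnext : pellState k (l.take (j + 1)) = some true := by
      rw [pellState_take_succ hj, hs, hk, Option.bind_some, pellStep_false_self]
    obtain ⟨hj', hk'⟩ := getElem_eq_of_pellState_take_eq_true hl hnext
    exact ⟨j, Or.inl rfl, hs, hj', hk, hk'⟩
  · obtain ⟨i, rfl⟩ : ∃ i, j = i + 1 := Nat.exists_eq_add_one.mpr <| Nat.pos_of_ne_zero <| by
      rintro rfl
      simp [pellState] at hs
    rw [pellState_take_succ (by omega), Option.bind_eq_some_iff] at hs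
    obtain ⟨s', hs', hstep⟩ := hs
    obtain ⟨rfl, hi⟩ := pellStep_eq_some_true hstep
    exact ⟨i, Or.inr rfl, hs', hj, hi, hk⟩

lemma isPellStr_set_pair (hl : isPellStr k l = true) {i : ℕ}
    (hs : pellState k (l.take i) = some false) (hi : i + 1 < l.length) (h₁ : l[i] = k)
    (h₂ : l[i + 1] = k) {c : ℕ} (hc : c < k) :
    isPellStr k ((l.set i c).set (i + 1) c) = true := by
  have hdrop : l.drop i = k :: k :: l.drop (i + 2) := by
    rw [List.drop_eq_getElem_cons (by omega), List.drop_eq_getElem_cons hi, h₁, h₂]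
  rw [isPellStr_iff_pellState] at hl ⊢
  rw [pellState_eq_bind _ i, List.take_set_of_le (by omega), List.take_set_of_le le_rfl, hs]
  rw [pellState_eq_bind _ i, hs, hdrop] at hl
  simpa [List.drop_set, hdrop, pellStep_of_lt hc] using hl

lemma even_of_isPellStr_of_getElem_ne (hl : isPellStr k l = true) {j : ℕ} (hj : j < l.length)
    (hne : l[j] ≠ k) (hpre : ∀ i (hi : i < j), l[i] = k) : Even j := by
  obtain ⟨s, hs⟩ := exists_pellState_take hl j
  have hs : pellState k (l.take j) = some false := by
    cases s
    · exact hs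
    · obtain ⟨_, hk⟩ := getElem_eq_of_pellState_take_eq_true hl hs
      exact absurd hk hne
  have htake : l.take j = List.replicate j k := by
    refine List.eq_replicate_iff.mpr ⟨by simp; omega, fun a ha => ?_⟩
    obtain ⟨i, hi, rfl⟩ := List.getElem_of_mem ha
    simp only [List.length_take] at hi
    simpa using hpre i (by omega)
  rw [htake] at hs
  obtain ⟨m, rfl | rfl⟩ := Nat.even_or_odd' j
  · exact even_two_mul m
  · simp [pellState, List.replicate_succ', List.foldlM_append,
      foldlM_pellStep_replicate_two_mul] at hs

end PellWords

def pellWord {n k : ℕ} (f : Fin n → Fin (k + 1)) : List ℕ :=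
  List.ofFn fun i => (f i : ℕ)

section Vertices

variable {n k : ℕ}

@[simp] lemma length_pellWord (f : Fin n → Fin (k + 1)) : (pellWord f).length = n := by
  simp [pellWord]

@[simp] lemma getElem_pellWord (f : Fin n → Fin (k + 1)) (i : ℕ)
    (hi : i < (pellWord f).length) :
    (pellWord f)[i] = f ⟨i, by simpa using hi⟩ := by
  simp only [pellWord, List.getElem_ofFn]

lemma pellWord_update (f : Fin n → Fin (k + 1)) (j : Fin n) (c : Fin (k + 1)) :
    pellWord (Function.update f j c) = (pellWord f).set j c := by
  refine List.ext_getElem (by simp) fun i h₁ h₂ => ?_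
  simp only [getElem_pellWord, List.getElem_set, Function.update_apply, Fin.ext_iff]
  split_ifs <;> first | rfl | omega

lemma isPellStr_pellWord_of_forall_lt {f : Fin n → Fin (k + 1)} (h : ∀ i, (f i : ℕ) < k) :
    isPellStr k (pellWord f) = true := by
  rw [isPellStr_iff_pellState]
  exact foldlM_pellStep_of_forall_lt (by simpa [pellWord] using h)

lemma isPellStr_pellWord_update {f : Fin n → Fin (k + 1)} (hf : isPellStr k (pellWord f) = true)
    {j : Fin n} (hj : (f j : ℕ) < k) {c : Fin (k + 1)} (hc : (c : ℕ) < k) :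
    isPellStr k (pellWord (Function.update f j c)) = true := by
  rw [pellWord_update]
  exact isPellStr_set_of_lt hf (by simp) (by simpa using hj) hc

lemma isPellStr_pellWord_update_pair {f : Fin n → Fin (k + 1)}
    (hf : isPellStr k (pellWord f) = true) {i i' : Fin n} (hi' : (i' : ℕ) = i + 1)
    (hs : pellState k ((pellWord f).take i) = some false) (h₁ : (f i : ℕ) = k)
    (h₂ : (f i' : ℕ) = k) {c : Fin (k + 1)} (hc : (c : ℕ) < k) :
    isPellStr k (pellWord (Function.update (Function.update f i c) i' c)) = true := by
  have hi : (i : ℕ) + 1 < (pellWord f).length := by simp [← hi']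
  rw [pellWord_update, pellWord_update, hi']
  exact isPellStr_set_pair hf hs hi (by simpa using h₁) (by simpa [← hi'] using h₂) hc

lemma exists_block_of_eq {f : Fin n → Fin (k + 1)} (hf : isPellStr k (pellWord f) = true)
    {j : Fin n} (hj : (f j : ℕ) = k) :
    ∃ i i' : Fin n, (i' : ℕ) = i + 1 ∧ (i = j ∨ i' = j) ∧
      pellState k ((pellWord f).take i) = some false ∧ (f i : ℕ) = k ∧ (f i' : ℕ) = k := by
  obtain ⟨i, hij, hs, hi, h₁, h₂⟩ :=
    exists_block_of_getElem_eq hf (j := j) (by simp) (by simpa using hj)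
  simp only [length_pellWord] at hi
  refine ⟨⟨i, by omega⟩, ⟨i + 1, hi⟩, rfl, ?_, hs, by simpa using h₁, by simpa using h₂⟩
  rcases hij with rfl | h
  · exact Or.inl rfl
  · exact Or.inr (Fin.ext h)

end Vertices

section Graph

variable {n k : ℕ}

lemma pellVert_natFun_injective :
    Function.Injective fun v : PellVert n k => fun i => (v.1 i : ℕ) :=
  fun _ _ h => Subtype.ext (funext fun i => Fin.ext (congrFun h i))

lemma kPellGraph_adj_of_pellAdj (hk : 0 < k) {u v : PellVert n k} (h : pellAdj k u.1 v.1) :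
    (kPellGraph n k).Adj u v := by
  refine (SimpleGraph.fromRel_adj _ u v).mpr ⟨?_, Or.inl h⟩
  rintro rfl
  rcases h with ⟨j, h, -⟩ | ⟨j, -, -, h₁, -, h₂, -⟩ <;> omega

lemma exists_adj_update_of_lt (hk : 2 ≤ k) (u : PellVert n k) {j : Fin n}
    (hj : (u.1 j : ℕ) < k) :
    ∃ v : PellVert n k, (kPellGraph n k).Adj u v ∧ v.1 j ≠ u.1 j ∧ ∀ i ≠ j, v.1 i = u.1 i := by
  let c : Fin (k + 1) := ⟨if (u.1 j : ℕ) = 0 then 1 else u.1 j - 1, by split_ifs <;> omega⟩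
  have hc : (c : ℕ) < k := by simp only [c]; split_ifs <;> omega
  let v : PellVert n k := ⟨Function.update u.1 j c, isPellStr_pellWord_update u.2 hj hc⟩
  have hv : ∀ i ≠ j, v.1 i = u.1 i := fun i hi => Function.update_of_ne hi _ _
  have hvj : v.1 j ≠ u.1 j := by
    simp only [v, c, Function.update_self, ne_eq, Fin.ext_iff]; split_ifs <;> omega
  refine ⟨v, ?_, hvj, hv⟩
  by_cases h0 : (u.1 j : ℕ) = 0
  · refine kPellGraph_adj_of_pellAdj (by omega)
      (Or.inl ⟨j, ?_, by omega, fun i hi => (hv i hi).symm⟩)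
    simp [v, c, h0]
  · refine (kPellGraph_adj_of_pellAdj (by omega) (Or.inl ⟨j, ?_, ?_, hv⟩)).symm
    all_goals simp [v, c, h0]; omega

lemma exists_adj_update_pair (hk : 0 < k) (u : PellVert n k) {i i' : Fin n}
    (hi' : (i' : ℕ) = i + 1) (hs : pellState k ((pellWord u.1).take i) = some false)
    (h₁ : (u.1 i : ℕ) = k) (h₂ : (u.1 i' : ℕ) = k) :
    ∃ v : PellVert n k, (kPellGraph n k).Adj u v ∧ (v.1 i : ℕ) = k - 1 ∧ (v.1 i' : ℕ) = k - 1 ∧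
      ∀ t, t ≠ i → t ≠ i' → v.1 t = u.1 t := by
  have hii' : i ≠ i' := fun h => by simp [h] at hi'
  let c : Fin (k + 1) := ⟨k - 1, by omega⟩
  let v : PellVert n k := ⟨Function.update (Function.update u.1 i c) i' c,
    isPellStr_pellWord_update_pair u.2 hi' hs h₁ h₂ (by simp [c]; omega)⟩
  have hvi : (v.1 i : ℕ) = k - 1 := by simp [v, c, hii']
  have hvi' : (v.1 i' : ℕ) = k - 1 := by simp [v, c]
  have hv : ∀ t, t ≠ i → t ≠ i' → v.1 t = u.1 t := fun t ht ht' => by simp [v, ht, ht']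
  exact ⟨v, (kPellGraph_adj_of_pellAdj hk (Or.inr ⟨i, i', hi', hvi, hvi', h₁, h₂, hv⟩)).symm,
    hvi, hvi', hv⟩

lemma exists_adj_ne_at (hk : 2 ≤ k) (u : PellVert n k) (j : Fin n) :
    ∃ v : PellVert n k, (kPellGraph n k).Adj u v ∧ v.1 j ≠ u.1 j ∧
      ∀ i : Fin n, ((i : ℕ) + 1 < j ∨ (j : ℕ) + 1 < i) → v.1 i = u.1 i := by
  rcases Nat.lt_or_ge (u.1 j : ℕ) k with hj | hj
  · obtain ⟨v, hadj, hne, hv⟩ := exists_adj_update_of_lt hk u hj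
    exact ⟨v, hadj, hne, fun i hi => hv i (by rintro rfl; omega)⟩
  · have hj : (u.1 j : ℕ) = k := le_antisymm (Nat.lt_succ_iff.mp (u.1 j).isLt) hj
    obtain ⟨i, i', hi', hij, hs, h₁, h₂⟩ := exists_block_of_eq u.2 hj
    obtain ⟨v, hadj, hvi, hvi', hv⟩ := exists_adj_update_pair (by omega) u hi' hs h₁ h₂
    refine ⟨v, hadj, ?_, fun t ht => hv t ?_ ?_⟩
    · rcases hij with rfl | rfl <;> simp [Fin.ext_iff, hvi, hvi', hj] <;> omega
    all_goals rintro rfl; rcases hij with rfl | rfl <;> omega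

theorem le_degree_kPellGraph (hk : 2 ≤ k) (u : PellVert n k) :
    (n + 1) / 2 ≤ (kPellGraph n k).degree u := by
  choose v hadj hne hfix using exists_adj_ne_at hk u
  let φ : Fin ((n + 1) / 2) → (kPellGraph n k).neighborSet u :=
    fun t => ⟨v ⟨2 * t, by omega⟩, hadj _⟩
  have hφ : Function.Injective φ := by
    -- the neighbour chosen at position `2 * s` agrees with `u` at every other even position
    intro s t hst
    by_contra hst'
    wlog hlt : (s : ℕ) < t generalizing s t
    · exact this hst.symm (Ne.symm hst') (by omega)
    apply hne ⟨2 * t, by omega⟩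
    rw [← congrArg (fun w : (kPellGraph n k).neighborSet u => w.1.1 ⟨2 * t, by omega⟩) hst]
    exact hfix _ _ (Or.inr (by simp; omega))
  calc (n + 1) / 2 = Fintype.card (Fin ((n + 1) / 2)) := (Fintype.card_fin _).symm
    _ ≤ Fintype.card ((kPellGraph n k).neighborSet u) := Fintype.card_le_of_injective φ hφ
    _ = (kPellGraph n k).degree u := SimpleGraph.card_neighborSet_eq_degree _ _

end Graph

theorem SimpleGraph.degree_le_card_of_forall_adj {V α β : Type*} (G : SimpleGraph V) {u : V}
    [Fintype (G.neighborSet u)] {w : V → β} (hw : Function.Injective w) (s : Finset α)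
    (F : α → β) (h : ∀ v, G.Adj u v → ∃ a ∈ s, w v = F a) : G.degree u ≤ s.card := by
  classical
  calc G.degree u = ((G.neighborFinset u).image w).card :=
        (Finset.card_image_of_injective _ hw).symm
    _ ≤ (s.image F).card := Finset.card_le_card fun b hb => by
        obtain ⟨v, hv, rfl⟩ := Finset.mem_image.mp hb
        obtain ⟨a, ha, hva⟩ := h v ((G.mem_neighborFinset u v).mp hv)
        exact Finset.mem_image.mpr ⟨a, ha, hva.symm⟩
    _ ≤ s.card := Finset.card_image_le

section UpperBound

variable {n k : ℕ}

def raiseAt (k : ℕ) (x : Fin n → ℕ) (j : Fin n) : Fin n → ℕ :=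
  if x j = k - 1 then fun i => if (i : ℕ) = j ∨ (i : ℕ) = j + 1 then k else x i
  else Function.update x j (x j + 1)

def lowerAt (k : ℕ) (x : Fin n → ℕ) (j : Fin n) : Fin n → ℕ :=
  if x j = k then fun i => if (i : ℕ) = j ∨ (i : ℕ) = j + 1 then k - 1 else x i
  else Function.update x j (x j - 1)

lemma exists_eq_raiseAt_of_pellAdj {f g : Fin n → Fin (k + 1)} (h : pellAdj k f g) :
    ∃ j, (fun i => (g i : ℕ)) = raiseAt k (fun i => (f i : ℕ)) j := by
  rcases h with ⟨j, hg, hlt, hfg⟩ | ⟨j, j', hj', hf, -, hg, hg', hfg⟩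
  · refine ⟨j, funext fun i => ?_⟩
    rw [raiseAt, if_neg (by omega), Function.update_apply]
    split_ifs with hi
    · rw [hi, hg]
    · rw [hfg i hi]
  · refine ⟨j, funext fun i => ?_⟩
    rw [raiseAt, if_pos hf]
    split_ifs with hi
    · rcases hi with hi | hi
      · rwa [Fin.ext hi]
      · rwa [Fin.ext (hi.trans hj'.symm)]
    · rw [hfg i (fun h => hi (Or.inl (congrArg _ h))) (fun h => hi (Or.inr (h ▸ hj')))]

lemma exists_eq_lowerAt_of_pellAdj {f g : Fin n → Fin (k + 1)} (h : pellAdj k f g) :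
    ∃ j, (fun i => (f i : ℕ)) = lowerAt k (fun i => (g i : ℕ)) j := by
  rcases h with ⟨j, hg, hlt, hfg⟩ | ⟨j, j', hj', hf, hf', hg, -, hfg⟩
  · refine ⟨j, funext fun i => ?_⟩
    rw [lowerAt, if_neg (by omega), Function.update_apply]
    split_ifs with hi
    · rw [hi, hg, Nat.add_sub_cancel]
    · rw [hfg i hi]
  · refine ⟨j, funext fun i => ?_⟩
    rw [lowerAt, if_pos hg]
    split_ifs with hi
    · rcases hi with hi | hi
      · rwa [Fin.ext hi]
      · rwa [Fin.ext (hi.trans hj'.symm)]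
    · rw [hfg i (fun h => hi (Or.inl (congrArg _ h))) (fun h => hi (Or.inr (h ▸ hj')))]

theorem degree_kPellGraph_le (u : PellVert n k) : (kPellGraph n k).degree u ≤ 2 * n := by
  calc (kPellGraph n k).degree u ≤ (Finset.univ : Finset (Fin n × Bool)).card := by
        refine (kPellGraph n k).degree_le_card_of_forall_adj pellVert_natFun_injective _
          (fun p => if p.2 then raiseAt k (fun i => (u.1 i : ℕ)) p.1
            else lowerAt k (fun i => (u.1 i : ℕ)) p.1) fun v hv => ?_
        rcases ((SimpleGraph.fromRel_adj _ u v).mp hv).2 with h | h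
        · obtain ⟨j, hj⟩ := exists_eq_raiseAt_of_pellAdj h
          exact ⟨(j, true), Finset.mem_univ _, hj⟩
        · obtain ⟨j, hj⟩ := exists_eq_lowerAt_of_pellAdj h
          exact ⟨(j, false), Finset.mem_univ _, hj⟩
    _ = 2 * n := by simp [mul_comm]

end UpperBound

section Extremal

variable {n k : ℕ}

theorem exists_two_mul_le_degree (hk : 3 ≤ k) :
    ∃ u : PellVert n k, 2 * n ≤ (kPellGraph n k).degree u := by
  let ones : Fin n → Fin (k + 1) := fun _ => ⟨1, by omega⟩
  let c : Bool → Fin (k + 1) := fun b => ⟨if b then 2 else 0, by split_ifs <;> omega⟩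
  have hc : ∀ b, (c b : ℕ) < k := fun b => by simp only [c]; split_ifs <;> omega
  have hc₁ : ∀ b, c b ≠ ⟨1, by omega⟩ := fun b => by cases b <;> simp [c]
  have hones : isPellStr k (pellWord ones) = true :=
    isPellStr_pellWord_of_forall_lt fun _ => by simp [ones]; omega
  let u : PellVert n k := ⟨ones, hones⟩
  let v : Fin n × Bool → PellVert n k := fun p =>
    ⟨Function.update ones p.1 (c p.2),
      isPellStr_pellWord_update hones (by simp [ones]; omega) (hc _)⟩
  have hadj : ∀ p, (kPellGraph n k).Adj u (v p) := by
    rintro ⟨j, b⟩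
    have hv : ∀ i ≠ j, (v (j, b)).1 i = u.1 i := fun i hi => by simp [v, u, hi]
    cases b
    · refine (kPellGraph_adj_of_pellAdj (by omega) (Or.inl ⟨j, ?_, ?_, hv⟩)).symm
      all_goals simp [v, c, u, ones] <;> omega
    · refine kPellGraph_adj_of_pellAdj (by omega) (Or.inl ⟨j, ?_, ?_, fun i hi => (hv i hi).symm⟩)
      all_goals simp [v, c, u, ones] <;> omega
  have hinj : Function.Injective fun p => (⟨v p, hadj p⟩ : (kPellGraph n k).neighborSet u) := by
    rintro ⟨j, b⟩ ⟨j', b'⟩ h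
    have h := congrFun (congrArg (fun w : (kPellGraph n k).neighborSet u => w.1.1) h) j
    simp only [v, Function.update_self] at h
    obtain rfl : j = j' := by
      by_contra hjj
      rw [Function.update_of_ne hjj] at h
      exact hc₁ b h
    obtain rfl : b = b' := by cases b <;> cases b' <;> simp_all [c]
    rfl
  refine ⟨u, ?_⟩
  calc 2 * n = Fintype.card (Fin n × Bool) := by simp [mul_comm]
    _ ≤ Fintype.card ((kPellGraph n k).neighborSet u) := Fintype.card_le_of_injective _ hinj
    _ = (kPellGraph n k).degree u := SimpleGraph.card_neighborSet_eq_degree _ _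

end Extremal

section MinDegree

variable {n k : ℕ}

def minDegreeString (n k : ℕ) : Fin n → Fin (k + 1) :=
  fun i => if (i : ℕ) < 2 * (n / 2) then Fin.last k else ⟨k - 1, by omega⟩

lemma val_minDegreeString (i : Fin n) :
    (minDegreeString n k i : ℕ) = if (i : ℕ) < 2 * (n / 2) then k else k - 1 := by
  unfold minDegreeString; split_ifs <;> rfl

lemma isPellStr_minDegreeString (hk : 0 < k) :
    isPellStr k (pellWord (minDegreeString n k)) = true := by
  have hword : pellWord (minDegreeString n k) =
      List.replicate (2 * (n / 2)) k ++ List.replicate (n % 2) (k - 1) := by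
    refine List.ext_getElem (by simp; omega) fun i h₁ h₂ => ?_
    simp only [length_pellWord] at h₁
    rw [getElem_pellWord, val_minDegreeString, List.getElem_append]
    simp only [List.length_replicate]
    split_ifs <;> simp [List.getElem_replicate]
  rw [isPellStr_iff_pellState, pellState, hword, List.foldlM_append,
    foldlM_pellStep_replicate_two_mul]
  exact foldlM_pellStep_of_forall_lt fun a ha => by rw [List.eq_of_mem_replicate ha]; omega

lemma not_pellAdj_minDegreeString (hk : 0 < k) (g : Fin n → Fin (k + 1)) :
    ¬ pellAdj k (minDegreeString n k) g := by
  rintro (⟨j, -, hlt, -⟩ | ⟨j, j', hj', h₁, h₂, -⟩)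
  · rw [val_minDegreeString] at hlt
    split_ifs at hlt <;> omega
  · rw [val_minDegreeString] at h₁ h₂
    have := j'.isLt
    split_ifs at h₁ h₂ <;> omega

def lowerBlock (n k t : ℕ) : Fin n → ℕ :=
  fun i => if (i : ℕ) / 2 = t then (minDegreeString n k i : ℕ) - 1 else minDegreeString n k i

lemma exists_eq_lowerBlock_of_pellAdj (hk : 0 < k) (v : PellVert n k)
    (h : pellAdj k v.1 (minDegreeString n k)) :
    ∃ t < (n + 1) / 2, (fun i => (v.1 i : ℕ)) = lowerBlock n k t := by
  rcases h with ⟨j, hw, hlt, hvw⟩ | ⟨j, j', hj', hv, hv', hw, hw', hvw⟩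
  · have hj := j.isLt
    have hj2 : 2 * (n / 2) ≤ j := by
      by_contra hj2
      rw [val_minDegreeString, if_pos (not_le.mp hj2)] at hw
      omega
    rw [val_minDegreeString, if_neg (by omega)] at hw
    refine ⟨n / 2, by omega, funext fun i => ?_⟩
    by_cases hij : i = j
    · subst hij
      rw [lowerBlock, if_pos (by omega), val_minDegreeString, if_neg (by omega)]
      omega
    · have hi : (i : ℕ) / 2 ≠ n / 2 := by
        have := i.isLt; have := Fin.val_ne_of_ne hij; omega
      simp [lowerBlock, hi, hvw i hij]
  · have hj := j'.isLt
    have hj2 : (j : ℕ) < 2 * (n / 2) := by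
      by_contra hj2
      rw [val_minDegreeString, if_neg hj2] at hw
      omega
    have heven : Even (j : ℕ) := by
      refine even_of_isPellStr_of_getElem_ne v.2 (j := j) (by simp) (by simp [hv]; omega)
        fun i hi => ?_
      have hi' : (⟨i, by omega⟩ : Fin n) ≠ j := fun h => by simp [← h] at hi
      have hi'' : (⟨i, by omega⟩ : Fin n) ≠ j' := fun h => by simp [Fin.ext_iff] at h; omega
      simp [hvw _ hi' hi'', val_minDegreeString, show i < 2 * (n / 2) by omega]
    obtain ⟨t, ht⟩ := heven
    refine ⟨t, by omega, funext fun i => ?_⟩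
    by_cases hi : (i : ℕ) / 2 = t
    · rw [lowerBlock, if_pos hi]
      rcases (by omega : (i : ℕ) = j ∨ (i : ℕ) = j') with h | h
      · rw [Fin.ext h, hv, hw]
      · rw [Fin.ext h, hv', hw']
    · rw [lowerBlock, if_neg hi,
        hvw i (fun h => hi (by subst h; omega)) (fun h => hi (by subst h; omega))]

theorem degree_minDegreeString_le (hk : 0 < k) :
    (kPellGraph n k).degree ⟨minDegreeString n k, isPellStr_minDegreeString hk⟩ ≤ (n + 1) / 2 := by
  refine ((kPellGraph n k).degree_le_card_of_forall_adj pellVert_natFun_injective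
    (Finset.range ((n + 1) / 2)) (lowerBlock n k) fun v hv => ?_).trans (Finset.card_range _).le
  rcases ((SimpleGraph.fromRel_adj _ _ v).mp hv).2 with h | h
  · exact absurd h (not_pellAdj_minDegreeString hk _)
  · obtain ⟨t, ht, hvt⟩ := exists_eq_lowerBlock_of_pellAdj hk v h
    exact ⟨t, Finset.mem_range.mpr ht, hvt⟩

end MinDegree

theorem kPellGraph_max_min_degree_general (n k : ℕ) (hk : 3 ≤ k) :
    (kPellGraph n k).maxDegree = 2 * n ∧ (kPellGraph n k).minDegree = (n + 1) / 2 := by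
  obtain ⟨u, hu⟩ := exists_two_mul_le_degree (n := n) hk
  have : Nonempty (PellVert n k) := ⟨u⟩
  constructor
  · exact le_antisymm ((kPellGraph n k).maxDegree_le_of_forall_degree_le _ degree_kPellGraph_le)
      (hu.trans ((kPellGraph n k).degree_le_maxDegree u))
  · exact le_antisymm (((kPellGraph n k).minDegree_le_degree _).trans
      (degree_minDegreeString_le (by omega)))
      ((kPellGraph n k).le_minDegree_of_forall_le_degree _ (le_degree_kPellGraph (by omega)))

theorem kPellGraph_max_min_degree (n k : ℕ) (hn : 1 ≤ n) (hk : 3 ≤ k) :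
    (kPellGraph n k).maxDegree = 2 * n ∧ (kPellGraph n k).minDegree = (n + 1) / 2 :=
  kPellGraph_max_min_degree_general n k hk
end

section
/- For n≥1 and k≥2, the k-Pell graph Π(n,k) is a median graph: every triple of vertices x, y, z has a unique vertex lying simultaneously on some shortest x,y-path, some shortest x,z-path, and some shortest y,z-path. -/
theorem SimpleGraph.dist_eq_of_exists_adj_step {V : Type*} {G : SimpleGraph V} (D : V → V → ℕ)
    (hself : ∀ u, D u u = 0) (htri : ∀ u v w, D u w ≤ D u v + D v w)
    (hadj : ∀ u v, G.Adj u v → D u v ≤ 1)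
    (hstep : ∀ u v, u ≠ v → ∃ w, G.Adj u w ∧ D w v + 1 = D u v) (u v : V) :
    G.dist u v = D u v := by
  have hle : ∀ {u v} (p : G.Walk u v), D u v ≤ p.length := by
    intro u v p
    induction p with
    | nil => simp [hself]
    | @cons a b c h p ih =>
      have := htri a b c
      have := hadj a b h
      rw [SimpleGraph.Walk.length_cons]
      omega
  have hwalk : ∀ N u, D u v = N → ∃ p : G.Walk u v, p.length = N := by
    intro N
    induction N with
    | zero =>
      intro u hu
      by_cases huv : u = v
      · subst huv
        exact ⟨.nil, rfl⟩
      · obtain ⟨w, -, hw⟩ := hstep u v huv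
        omega
    | succ N ih =>
      intro u hu
      have huv : u ≠ v := by
        rintro rfl
        simp [hself] at hu
      obtain ⟨w, hadj, hw⟩ := hstep u v huv
      obtain ⟨p, hp⟩ := ih w (by omega)
      exact ⟨.cons hadj p, by simp [hp]⟩
  obtain ⟨p, hp⟩ := hwalk _ u rfl
  obtain ⟨q, hq⟩ := p.reachable.exists_walk_length_eq_dist
  exact le_antisymm (hp ▸ SimpleGraph.dist_le p) (hq ▸ hle q)

section Median

variable {α : Type*} [LinearOrder α]

def median3 (a b c : α) : α := max (min a b) (min (max a b) c)

theorem median3_mem_uIcc (a b c : α) :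
    median3 a b c ∈ Set.uIcc a b ∧ median3 a b c ∈ Set.uIcc a c ∧
      median3 a b c ∈ Set.uIcc b c := by
  simp only [median3, Set.mem_uIcc]
  grind

theorem eq_median3_of_mem_uIcc {a b c u : α} (hab : u ∈ Set.uIcc a b) (hac : u ∈ Set.uIcc a c)
    (hbc : u ∈ Set.uIcc b c) : u = median3 a b c := by
  simp only [median3, Set.mem_uIcc] at *
  grind

end Median

theorem Bool.median3_eq (a b c : Bool) : median3 a b c = (a && b || a && c || b && c) := by
  revert a b c
  decide

theorem Nat.dist_add_dist_eq_iff {a b u : ℕ} :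
    Nat.dist a u + Nat.dist u b = Nat.dist a b ↔ u ∈ Set.uIcc a b := by
  simp only [Nat.dist, Set.mem_uIcc]
  omega

theorem Bool.ite_add_ite_eq_ite_iff_mem_uIcc {a b u : Bool} :
    ((if a = u then 0 else 1) + (if u = b then 0 else 1) : ℕ) = (if a = b then 0 else 1) ↔
      u ∈ Set.uIcc a b := by
  cases a <;> cases b <;> cases u <;> simp

namespace KPell

def pairStart (k : ℕ) (a : ℕ → ℕ) : ℕ → Bool
  | 0 => a 0 == k
  | i + 1 => a (i + 1) == k && !pairStart k a i

section PairStart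

variable {k : ℕ} {a : ℕ → ℕ}

lemma eq_of_pairStart {i : ℕ} (h : pairStart k a i = true) : a i = k := by
  cases i <;> simp_all [pairStart]

lemma eq_pairStart {s : ℕ → Bool} (h0 : s 0 = (a 0 == k))
    (hsucc : ∀ i, s (i + 1) = (a (i + 1) == k && !s i)) : s = pairStart k a := by
  funext i
  induction i with
  | zero => exact h0
  | succ i ih => rw [hsucc, ih, pairStart]

lemma pairStart_add_of_eq_false {m : ℕ} (h : pairStart k a m = false) (i : ℕ) :
    pairStart k a (i + (m + 1)) = pairStart k (fun j => a (j + (m + 1))) i := by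
  induction i with
  | zero => simp [pairStart, h]
  | succ i ih =>
    rw [show i + 1 + (m + 1) = i + (m + 1) + 1 by omega, pairStart, ih, pairStart,
      show i + 1 + (m + 1) = i + (m + 1) + 1 by omega]

end PairStart

theorem isPellStr_iff {k : ℕ} (hk : k ≠ 0) {l : List ℕ} (hl : ∀ x ∈ l, x ≤ k) :
    isPellStr k l = true ↔
      ∀ i, pairStart k (l.getD · 0) i = true → l.getD (i + 1) 0 = k := by
  induction l using isPellStr.induct k with
  | case1 =>
    simp only [isPellStr, List.getD_nil, true_iff]
    intro i hi
    exact absurd (eq_of_pairStart hi).symm hk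
  | case2 a =>
    have ha : a ≤ k := hl a (by simp)
    have hps : ∀ i, pairStart k ([a].getD · 0) i = true → i = 0 ∧ a = k := by
      intro i hi
      have := eq_of_pairStart hi
      rcases i with _ | i
      · simpa using this
      · exact absurd (by simpa using this.symm) hk
    simp only [isPellStr, decide_eq_true_eq]
    constructor
    · intro hlt i hi
      exact absurd (hps i hi).2 hlt.ne
    · intro h
      refine lt_of_le_of_ne ha fun hak => hk ?_
      simpa using (h 0 (by simp [pairStart, hak])).symm
  | case3 b rest ih =>
    have hrest : ∀ x ∈ rest, x ≤ k := fun x hx => hl x (by simp [hx])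
    have hshift : ∀ j, b = k → pairStart k ((k :: b :: rest).getD · 0) (j + (1 + 1)) =
        pairStart k (rest.getD · 0) j := fun j hb =>
      pairStart_add_of_eq_false (by simp [pairStart, hb]) j
    simp only [isPellStr, if_pos, Bool.and_eq_true, beq_iff_eq, ih hrest]
    constructor
    · rintro ⟨rfl, h⟩ i hi
      match i with
      | 0 => rfl
      | 1 => simp [pairStart] at hi
      | j + 2 => simpa using h j (by rwa [← hshift j rfl])
    · intro h
      have hb : b = k := by simpa using h 0 (by simp [pairStart])
      refine ⟨hb, fun j hj => ?_⟩
      simpa using h (j + 2) (by rwa [hshift j hb])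
  | case4 a b rest ha ih =>
    have hrest : ∀ x ∈ b :: rest, x ≤ k := fun x hx => hl x (List.mem_cons_of_mem a hx)
    have hshift : ∀ j, pairStart k ((a :: b :: rest).getD · 0) (j + (0 + 1)) =
        pairStart k ((b :: rest).getD · 0) j := fun j =>
      pairStart_add_of_eq_false (by simp [pairStart, ha]) j
    have hlt : a < k := lt_of_le_of_ne (hl a (by simp)) ha
    simp only [isPellStr, if_neg ha, Bool.and_eq_true, decide_eq_true_eq, hlt, true_and, ih hrest]
    constructor
    · intro h i hi
      match i with
      | 0 => simp [pairStart, ha] at hi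
      | j + 1 => simpa using h j (by rwa [← hshift j])
    · intro h j hj
      simpa using h (j + 1) (by rwa [hshift j])

section Seq

variable {n k : ℕ}

def seq (f : Fin n → Fin (k + 1)) (i : ℕ) : ℕ := if h : i < n then f ⟨i, h⟩ else 0

lemma seq_val (f : Fin n → Fin (k + 1)) (j : Fin n) : seq f j = f j := by
  simp [seq]

lemma seq_of_le (f : Fin n → Fin (k + 1)) {i : ℕ} (hi : n ≤ i) : seq f i = 0 := by
  simp [seq, not_lt.2 hi]

lemma seq_le (f : Fin n → Fin (k + 1)) (i : ℕ) : seq f i ≤ k := by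
  unfold seq
  split_ifs
  · exact Fin.is_le _
  · exact Nat.zero_le k

lemma getD_ofFn (f : Fin n → Fin (k + 1)) (i : ℕ) :
    (List.ofFn fun j => (f j : ℕ)).getD i 0 = seq f i := by
  rw [List.getD_eq_getElem?_getD, List.getElem?_ofFn]
  unfold seq
  split <;> simp_all

theorem isPellStr_ofFn_iff (hk : k ≠ 0) (f : Fin n → Fin (k + 1)) :
    isPellStr k (List.ofFn fun j => (f j : ℕ)) = true ↔
      ∀ i, pairStart k (seq f) i = true → seq f (i + 1) = k := by
  rw [isPellStr_iff hk (by simp [List.mem_ofFn, Fin.is_le])]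
  simp only [getD_ofFn]

def SeqAdj (n k : ℕ) (a b : ℕ → ℕ) : Prop :=
  (∃ j < n, b j = a j + 1 ∧ a j + 1 < k ∧ ∀ i, i ≠ j → a i = b i) ∨
  (∃ j, j + 1 < n ∧ a j = k - 1 ∧ a (j + 1) = k - 1 ∧ b j = k ∧ b (j + 1) = k ∧
    ∀ i, i ≠ j ∧ i ≠ j + 1 → a i = b i)

lemma forall_seq_eq_iff {f g : Fin n → Fin (k + 1)} {p : ℕ → Prop} :
    (∀ i, p i → seq f i = seq g i) ↔ ∀ i : Fin n, p i → f i = g i := by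
  constructor
  · intro h i hi
    exact Fin.ext (by simpa [seq_val] using h i hi)
  · intro h i hi
    unfold seq
    split_ifs with hin
    · rw [h ⟨i, hin⟩ hi]
    · rfl

theorem pellAdj_iff_seqAdj (f g : Fin n → Fin (k + 1)) :
    pellAdj k f g ↔ SeqAdj n k (seq f) (seq g) := by
  simp only [pellAdj, SeqAdj, forall_seq_eq_iff]
  constructor
  · rintro (⟨j, hj, hlt, hrest⟩ | ⟨j, j', hj', hfj, hfj', hgj, hgj', hrest⟩)
    · refine Or.inl ⟨j, j.2, by rw [seq_val, seq_val, hj], by rwa [seq_val], ?_⟩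
      exact fun i hi => hrest i (Fin.val_ne_iff.1 hi)
    · refine Or.inr ⟨j, hj' ▸ j'.2, by rwa [seq_val], by rwa [← hj', seq_val],
        by rwa [seq_val], by rwa [← hj', seq_val], ?_⟩
      exact fun i hi => hrest i (Fin.val_ne_iff.1 hi.1) (Fin.val_ne_iff.1 (hj' ▸ hi.2))
  · rintro (⟨j, hj, hgj, hlt, hrest⟩ | ⟨j, hj, hfj, hfj', hgj, hgj', hrest⟩)
    · have hf := seq_val f ⟨j, hj⟩
      have hg := seq_val g ⟨j, hj⟩
      refine Or.inl ⟨⟨j, hj⟩, by simp_all, by simp_all, fun i hi => hrest i ?_⟩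
      exact Fin.val_ne_iff.2 hi
    · have hf := seq_val f ⟨j, by omega⟩
      have hg := seq_val g ⟨j, by omega⟩
      have hf' := seq_val f ⟨j + 1, hj⟩
      have hg' := seq_val g ⟨j + 1, hj⟩
      refine Or.inr ⟨⟨j, by omega⟩, ⟨j + 1, hj⟩, rfl, by simp_all, by simp_all,
        by simp_all, by simp_all,
        fun i hi hi' => hrest i ⟨Fin.val_ne_iff.2 hi, Fin.val_ne_iff.2 hi'⟩⟩

end Seq

/-- The code of a Pell string `a` is `w i = min (a i) (k - 1)` together with the positions `i`
where a block `kk` starts; both are padded beyond `n`. -/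
@[ext]
structure PellCode (n k : ℕ) where
  w : ℕ → ℕ
  s : ℕ → Bool
  w_le : ∀ i, w i ≤ k - 1
  w_eq_zero : ∀ i, n ≤ i → w i = 0
  s_spec : ∀ i, s i = true →
    i + 1 < n ∧ w i = k - 1 ∧ w (i + 1) = k - 1 ∧ s (i + 1) = false

namespace PellCode

variable {n k : ℕ} (c d : PellCode n k)

lemma s_eq_false {i : ℕ} (hi : n ≤ i) : c.s i = false := by
  by_contra h
  have := (c.s_spec i (by simpa using h)).1
  omega

def Covered (i : ℕ) : Prop := c.s i = true ∨ (i ≠ 0 ∧ c.s (i - 1) = true)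

instance (i : ℕ) : Decidable (c.Covered i) := inferInstanceAs (Decidable (_ ∨ _))

lemma s_eq_false_of_not_covered {i : ℕ} (h : ¬c.Covered i) : c.s i = false := by
  simpa using fun hs => h (Or.inl hs)

lemma covered_succ {i : ℕ} (h : c.s i = true) : c.Covered (i + 1) :=
  Or.inr ⟨Nat.add_one_ne_zero i, h⟩

lemma w_of_covered {i : ℕ} (h : c.Covered i) : c.w i = k - 1 := by
  rcases h with h | ⟨hi, h⟩
  · exact (c.s_spec i h).2.1
  · simpa [Nat.sub_add_cancel (Nat.pos_of_ne_zero hi)] using (c.s_spec (i - 1) h).2.2.1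

def seq (i : ℕ) : ℕ := if c.Covered i then k else c.w i

lemma seq_of_covered {i : ℕ} (h : c.Covered i) : c.seq i = k := if_pos h

lemma seq_of_not_covered {i : ℕ} (h : ¬c.Covered i) : c.seq i = c.w i := if_neg h

lemma seq_congr {c d : PellCode n k} {i : ℕ} (hcov : c.Covered i ↔ d.Covered i)
    (hw : c.w i = d.w i) : c.seq i = d.seq i :=
  if_congr hcov rfl hw

lemma seq_le (i : ℕ) : c.seq i ≤ k := by
  unfold seq
  split_ifs
  · rfl
  · exact (c.w_le i).trans (Nat.sub_le k 1)

lemma seq_eq_iff (hk : k ≠ 0) {i : ℕ} : c.seq i = k ↔ c.Covered i := by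
  refine ⟨fun h => by_contra fun hc => ?_, c.seq_of_covered⟩
  have := c.w_le i
  rw [c.seq_of_not_covered hc] at h
  omega

lemma min_seq (i : ℕ) : min (c.seq i) (k - 1) = c.w i := by
  by_cases h : c.Covered i
  · rw [c.seq_of_covered h, c.w_of_covered h]
    omega
  · rw [c.seq_of_not_covered h]
    exact min_eq_left (c.w_le i)

lemma seq_of_le {i : ℕ} (hi : n ≤ i) : c.seq i = 0 := by
  have hcov : ¬c.Covered i := by
    rintro (h | ⟨-, h⟩)
    · simp [c.s_eq_false hi] at h
    · have := (c.s_spec _ h).1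
      omega
  rw [c.seq_of_not_covered hcov, c.w_eq_zero i hi]

lemma pairStart_seq (hk : k ≠ 0) : pairStart k c.seq = c.s := by
  refine (eq_pairStart ?_ fun i => ?_).symm
  · rw [Bool.eq_iff_iff, beq_iff_eq, c.seq_eq_iff hk]
    simp [Covered]
  · cases hi : c.s i
    · rw [Bool.not_false, Bool.and_true, Bool.eq_iff_iff, beq_iff_eq, c.seq_eq_iff hk]
      simp [Covered, hi]
    · rw [Bool.not_true, Bool.and_false, (c.s_spec i hi).2.2.2]

theorem seq_injective (hk : k ≠ 0) : Function.Injective (seq : PellCode n k → ℕ → ℕ) := by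
  intro c d h
  ext i
  · rw [← c.min_seq, ← d.min_seq, h]
  · rw [← c.pairStart_seq hk, ← d.pairStart_seq hk, h]

def toFun : Fin n → Fin (k + 1) := fun j => ⟨c.seq j, Nat.lt_succ_of_le (c.seq_le j)⟩

lemma seq_toFun : KPell.seq c.toFun = c.seq := by
  funext i
  unfold KPell.seq
  split_ifs with hi
  · rfl
  · exact (c.seq_of_le (not_lt.1 hi)).symm

def ofVert (hk : k ≠ 0) (u : PellVert n k) : PellCode n k where
  w i := min (KPell.seq u.1 i) (k - 1)
  s := pairStart k (KPell.seq u.1)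
  w_le _ := min_le_right _ _
  w_eq_zero i hi := by simp [KPell.seq_of_le _ hi]
  s_spec i hi := by
    have hnext := (isPellStr_ofFn_iff hk u.1).1 u.2 i hi
    refine ⟨?_, by simp [eq_of_pairStart hi], by simp [hnext], by simp [pairStart, hi]⟩
    by_contra h
    rw [KPell.seq_of_le _ (by omega)] at hnext
    exact hk hnext.symm

lemma seq_ofVert (hk : k ≠ 0) (u : PellVert n k) : (ofVert hk u).seq = KPell.seq u.1 := by
  have hvalid := (isPellStr_ofFn_iff hk u.1).1 u.2
  funext i
  by_cases h : KPell.seq u.1 i = k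
  · refine ((ofVert hk u).seq_of_covered ?_).trans h.symm
    rcases i with _ | i
    · simp [Covered, ofVert, pairStart, h]
    · cases hi : pairStart k (KPell.seq u.1) i
      · simp [Covered, ofVert, pairStart, h, hi]
      · simp [Covered, ofVert, hi]
  · have hcov : ¬(ofVert hk u).Covered i := by
      rintro (hc | ⟨hi, hc⟩)
      · exact h (eq_of_pairStart hc)
      · exact h (by simpa [Nat.sub_add_cancel (Nat.pos_of_ne_zero hi)] using hvalid _ hc)
    rw [seq_of_not_covered _ hcov]
    have := KPell.seq_le u.1 i
    simp only [ofVert]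
    omega

def toVert (hk : k ≠ 0) : PellVert n k :=
  ⟨c.toFun, by
    rw [isPellStr_ofFn_iff hk, seq_toFun, c.pairStart_seq hk]
    intro i hi
    exact c.seq_of_covered (c.covered_succ hi)⟩

def equiv (hk : k ≠ 0) : PellVert n k ≃ PellCode n k where
  toFun := ofVert hk
  invFun c := c.toVert hk
  left_inv u := Subtype.ext <| funext fun j => Fin.ext <| by
    change (ofVert hk u).seq j = u.1 j
    rw [seq_ofVert, KPell.seq_val]
  right_inv c := seq_injective hk ((seq_ofVert hk _).trans c.seq_toFun)

lemma seq_equiv (hk : k ≠ 0) (u : PellVert n k) : (equiv hk u).seq = KPell.seq u.1 :=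
  seq_ofVert hk u

def coordDist (i : ℕ) : ℕ := Nat.dist (c.w i) (d.w i) + if c.s i = d.s i then 0 else 1

def dist : ℕ := ∑ i ∈ Finset.range n, c.coordDist d i

def AgreeOff (i : ℕ) : Prop := ∀ m, m ≠ i → c.w m = d.w m ∧ c.s m = d.s m

variable {c d}

lemma coordDist_self (i : ℕ) : c.coordDist c i = 0 := by
  simp [coordDist]

lemma coordDist_comm (i : ℕ) : c.coordDist d i = d.coordDist c i := by
  simp only [coordDist, Nat.dist_comm (c.w i), eq_comm (a := c.s i)]

lemma coordDist_triangle (e : PellCode n k) (i : ℕ) :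
    c.coordDist e i ≤ c.coordDist d i + d.coordDist e i := by
  have := Nat.dist.triangle_inequality (c.w i) (d.w i) (e.w i)
  unfold coordDist
  split_ifs <;> simp_all <;> omega

lemma dist_self : c.dist c = 0 := by
  simp [dist, coordDist_self]

lemma dist_comm : c.dist d = d.dist c := by
  simp only [dist, coordDist_comm]

lemma dist_triangle (e : PellCode n k) : c.dist e ≤ c.dist d + d.dist e := by
  rw [dist, dist, dist, ← Finset.sum_add_distrib]
  exact Finset.sum_le_sum fun i _ => coordDist_triangle e i

lemma AgreeOff.symm {i : ℕ} (h : c.AgreeOff d i) : d.AgreeOff c i :=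
  fun m hm => ⟨(h m hm).1.symm, (h m hm).2.symm⟩

lemma AgreeOff.dist_add_coordDist {i : ℕ} (h : c.AgreeOff d i) (hi : i < n) (e : PellCode n k) :
    d.dist e + c.coordDist e i = c.dist e + d.coordDist e i := by
  have hrest : ∀ m ∈ (Finset.range n).erase i, d.coordDist e m = c.coordDist e m := by
    intro m hm
    obtain ⟨hw, hs⟩ := h m (Finset.ne_of_mem_erase hm)
    rw [coordDist, coordDist, hw, hs]
  rw [dist, dist, ← Finset.sum_erase_add _ _ (Finset.mem_range.2 hi),
    ← Finset.sum_erase_add _ _ (Finset.mem_range.2 hi), Finset.sum_congr rfl hrest]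
  ac_rfl

lemma AgreeOff.dist_eq {i : ℕ} (h : c.AgreeOff d i) (hi : i < n) :
    c.dist d = c.coordDist d i := by
  simpa [dist_self, coordDist_self] using (h.dist_add_coordDist hi d).symm

lemma exists_agreeOff_of_dist_eq_one (h : c.dist d = 1) :
    ∃ i < n, c.AgreeOff d i ∧ c.coordDist d i = 1 := by
  obtain ⟨i, hi, hne⟩ :=
    Finset.exists_ne_zero_of_sum_ne_zero (h ▸ one_ne_zero : c.dist d ≠ 0)
  have hi' := Finset.mem_range.1 hi
  have hle := Finset.single_le_sum (f := c.coordDist d) (fun _ _ => Nat.zero_le _) hi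
  refine ⟨i, hi', fun m hm => ?_, by rw [dist] at h; omega⟩
  have hzero : c.coordDist d m = 0 := by
    by_cases hmn : m < n
    · have := Finset.add_le_sum (f := c.coordDist d) (fun _ _ => Nat.zero_le _) hi
        (Finset.mem_range.2 hmn) (Ne.symm hm)
      rw [← dist, h] at this
      omega
    · simp [coordDist, c.w_eq_zero m (by omega), d.w_eq_zero m (by omega),
        c.s_eq_false (by omega : n ≤ m), d.s_eq_false (by omega : n ≤ m)]
  unfold coordDist at hzero
  split_ifs at hzero with hs
  exact ⟨Nat.eq_of_dist_eq_zero (by omega), hs⟩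

variable (c)

@[simps w s]
def setW (i v : ℕ) (hi : i < n) (hv : v ≤ k - 1) (hfree : ¬c.Covered i) : PellCode n k where
  w := Function.update c.w i v
  s := c.s
  w_le m := by
    rw [Function.update_apply]
    split_ifs
    exacts [hv, c.w_le m]
  w_eq_zero m hm := by rw [Function.update_of_ne (by omega), c.w_eq_zero m hm]
  s_spec m hm := by
    have hmi : m ≠ i := fun h => hfree (Or.inl (h ▸ hm))
    have hmi' : m + 1 ≠ i := fun h => hfree (h ▸ c.covered_succ hm)
    rw [Function.update_of_ne hmi, Function.update_of_ne hmi']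
    exact c.s_spec m hm

@[simps w s]
def insertPair (i : ℕ) (hi : i + 1 < n) (hw : c.w i = k - 1) (hw' : c.w (i + 1) = k - 1)
    (hfree : ¬c.Covered i) (hfree' : ¬c.Covered (i + 1)) : PellCode n k where
  w := c.w
  s := Function.update c.s i true
  w_le := c.w_le
  w_eq_zero := c.w_eq_zero
  s_spec m hm := by
    by_cases hmi : m = i
    · subst hmi
      refine ⟨hi, hw, hw', ?_⟩
      rw [Function.update_of_ne (by omega)]
      exact c.s_eq_false_of_not_covered hfree'
    · rw [Function.update_of_ne hmi] at hm
      have hmi' : m + 1 ≠ i := fun h => hfree (h ▸ c.covered_succ hm)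
      rw [Function.update_of_ne hmi']
      exact c.s_spec m hm

@[simps w s]
def erasePair (i : ℕ) : PellCode n k where
  w := c.w
  s := Function.update c.s i false
  w_le := c.w_le
  w_eq_zero := c.w_eq_zero
  s_spec m hm := by
    have hmi : m ≠ i := by rintro rfl; simp at hm
    rw [Function.update_of_ne hmi] at hm
    obtain ⟨h1, h2, h3, h4⟩ := c.s_spec m hm
    refine ⟨h1, h2, h3, ?_⟩
    rw [Function.update_apply]
    split_ifs <;> simp [h4]

variable {c}

section setW

variable {i v : ℕ} {hi : i < n} {hv : v ≤ k - 1} {hfree : ¬c.Covered i}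

lemma seq_setW : (c.setW i v hi hv hfree).seq = Function.update c.seq i v := by
  funext m
  rw [Function.update_apply]
  split_ifs with hm
  · subst hm
    exact (seq_of_not_covered (c.setW _ _ _ _ _) hfree).trans (Function.update_self ..)
  · exact seq_congr Iff.rfl (Function.update_of_ne hm ..)

lemma agreeOff_setW : c.AgreeOff (c.setW i v hi hv hfree) i :=
  fun _ hm => ⟨(Function.update_of_ne hm ..).symm, rfl⟩

lemma coordDist_setW : c.coordDist (c.setW i v hi hv hfree) i = Nat.dist (c.w i) v := by
  simp [coordDist, setW]

end setW

section insertPair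

variable {i : ℕ} {hi : i + 1 < n} {hw : c.w i = k - 1} {hw' : c.w (i + 1) = k - 1}
  {hfree : ¬c.Covered i} {hfree' : ¬c.Covered (i + 1)}

lemma seq_insertPair (m : ℕ) : (c.insertPair i hi hw hw' hfree hfree').seq m =
    if m = i ∨ m = i + 1 then k else c.seq m := by
  split_ifs with hm
  · refine seq_of_covered _ ?_
    rcases hm with rfl | rfl
    · exact Or.inl (Function.update_self ..)
    · exact Or.inr ⟨by omega, by simp [insertPair]⟩
  · refine seq_congr ?_ rfl
    simp only [Covered, insertPair, Function.update_apply]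
    grind

lemma agreeOff_insertPair : c.AgreeOff (c.insertPair i hi hw hw' hfree hfree') i :=
  fun _ hm => ⟨rfl, (Function.update_of_ne hm ..).symm⟩

lemma coordDist_insertPair : c.coordDist (c.insertPair i hi hw hw' hfree hfree') i = 1 := by
  simp [coordDist, insertPair, c.s_eq_false_of_not_covered hfree]

lemma seqAdj_insertPair :
    SeqAdj n k c.seq (c.insertPair i hi hw hw' hfree hfree').seq := by
  refine Or.inr ⟨i, hi, by rw [c.seq_of_not_covered hfree, hw],
    by rw [c.seq_of_not_covered hfree', hw'], by simp [seq_insertPair],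
    by simp [seq_insertPair], fun m hm => by simp [seq_insertPair, hm.1, hm.2]⟩

end insertPair

lemma agreeOff_erasePair (i : ℕ) : c.AgreeOff (c.erasePair i) i :=
  fun _ hm => ⟨rfl, (Function.update_of_ne hm ..).symm⟩

lemma seqAdj_setW {i : ℕ} {hi : i < n} {hv : c.w i + 1 ≤ k - 1} {hfree : ¬c.Covered i} :
    SeqAdj n k c.seq (c.setW i (c.w i + 1) hi hv hfree).seq := by
  have hseq := c.seq_of_not_covered hfree
  refine Or.inl ⟨i, hi, ?_, by omega, fun m hm => ?_⟩
  · rw [seq_setW, Function.update_self, hseq]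
  · rw [seq_setW, Function.update_of_ne hm]

def HasStepToward (c d : PellCode n k) : Prop :=
  ∃ c' : PellCode n k, c.dist c' = 1 ∧ c'.dist d + 1 = c.dist d

lemma hasStepToward_of_agreeOff {c' : PellCode n k} {i : ℕ} (hi : i < n) (h : c.AgreeOff c' i)
    (h1 : c.coordDist c' i = 1) (h2 : c'.coordDist d i + 1 = c.coordDist d i) :
    c.HasStepToward d := by
  refine ⟨c', (h.dist_eq hi).trans h1, ?_⟩
  have := h.dist_add_coordDist hi d
  omega

lemma not_covered_of_s_le (hle : ∀ m, c.s m = true → d.s m = true) {i : ℕ}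
    (hc : c.s i = false) (hd : d.s i = true) : ¬c.Covered i ∧ ¬c.Covered (i + 1) := by
  have hd' := (d.s_spec i hd).2.2.2
  refine ⟨?_, ?_⟩
  · rintro (hc' | ⟨h0, hc'⟩)
    · simp [hc] at hc'
    · have := (d.s_spec _ (hle _ hc')).2.2.2
      rw [Nat.sub_add_cancel (Nat.pos_of_ne_zero h0), hd] at this
      contradiction
  · rintro (hc' | ⟨-, hc'⟩)
    · simp [hle _ hc'] at hd'
    · simp [hc] at hc'

lemma hasStepToward_of_s_true_of_s_false {i : ℕ} (hc : c.s i = true) (hd : d.s i = false) :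
    c.HasStepToward d := by
  refine hasStepToward_of_agreeOff (by have := (c.s_spec i hc).1; omega) (agreeOff_erasePair i)
    ?_ ?_ <;> simp [coordDist, hc, hd]

lemma hasStepToward_of_w_ne (hle : ∀ m, c.s m = true → d.s m = true) {i : ℕ}
    (hne : c.w i ≠ d.w i) : c.HasStepToward d := by
  have hi : i < n := by
    by_contra hi
    exact hne (by rw [c.w_eq_zero i (by omega), d.w_eq_zero i (by omega)])
  have hfree : ¬c.Covered i := fun hcov => hne <| by
    rw [c.w_of_covered hcov, d.w_of_covered (hcov.imp (hle i) (And.imp_right (hle _)))]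
  obtain ⟨v, hv, hcv, hvd⟩ : ∃ v ≤ k - 1, Nat.dist (c.w i) v = 1 ∧
      Nat.dist v (d.w i) + 1 = Nat.dist (c.w i) (d.w i) := by
    have := c.w_le i
    have := d.w_le i
    rcases Nat.lt_or_gt_of_ne hne with hlt | hlt
    · exact ⟨c.w i + 1, by omega, by simp [Nat.dist], by unfold Nat.dist; omega⟩
    · exact ⟨c.w i - 1, by omega, by unfold Nat.dist; omega, by unfold Nat.dist; omega⟩
  refine hasStepToward_of_agreeOff hi (agreeOff_setW (hi := hi) (hv := hv) (hfree := hfree))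
    (by rw [coordDist_setW, hcv]) ?_
  have hs : (c.setW i v hi hv hfree).s i = c.s i := rfl
  have hw : (c.setW i v hi hv hfree).w i = v := Function.update_self ..
  simp only [coordDist, hs, hw]
  omega

lemma hasStepToward_of_s_false_of_s_true (hle : ∀ m, c.s m = true → d.s m = true)
    (hw : ∀ m, c.w m = d.w m) {i : ℕ} (hc : c.s i = false) (hd : d.s i = true) :
    c.HasStepToward d := by
  obtain ⟨hi, hwi, hwi', -⟩ := d.s_spec i hd
  obtain ⟨hfree, hfree'⟩ := not_covered_of_s_le hle hc hd
  exact hasStepToward_of_agreeOff (by omega) (agreeOff_insertPair (hw := (hw i).trans hwi)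
    (hw' := (hw (i + 1)).trans hwi') (hi := hi) (hfree := hfree) (hfree' := hfree'))
    coordDist_insertPair (by simp [coordDist, hw, hc, hd])

theorem hasStepToward_of_ne (h : c ≠ d) : c.HasStepToward d := by
  by_cases hA : ∃ i, c.s i = true ∧ d.s i = false
  · obtain ⟨i, hc, hd⟩ := hA
    exact hasStepToward_of_s_true_of_s_false hc hd
  have hle : ∀ i, c.s i = true → d.s i = true := by simpa using hA
  by_cases hB : ∃ i, c.w i ≠ d.w i
  · obtain ⟨i, hne⟩ := hB
    exact hasStepToward_of_w_ne hle hne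
  have hw : ∀ i, c.w i = d.w i := by simpa using hB
  obtain ⟨i, hc, hd⟩ : ∃ i, c.s i = false ∧ d.s i = true := by
    by_contra hC
    refine h (PellCode.ext (funext hw) (funext fun i => ?_))
    cases hci : c.s i
    · simp_all
    · exact (hle i hci).symm
  exact hasStepToward_of_s_false_of_s_true hle hw hc hd

-- `d` is recognised as a one-coordinate modification of `c` from its letters alone, which
-- avoids recomputing where the blocks `kk` of `d` start.
theorem dist_eq_one_of_seqAdj (hk : k ≠ 0) (h : SeqAdj n k c.seq d.seq) : c.dist d = 1 := by
  rcases h with ⟨j, hj, hdj, hlt, hrest⟩ | ⟨j, hj, hcj, hcj', hdj, hdj', hrest⟩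
  · have hfree : ¬c.Covered j := fun hcov => by rw [c.seq_of_covered hcov] at hlt; omega
    have hcw := c.seq_of_not_covered hfree
    have hd : d = c.setW j (c.w j + 1) hj (by omega) hfree := by
      refine seq_injective hk (funext fun m => ?_)
      rw [seq_setW, Function.update_apply]
      split_ifs with hm
      · rw [hm, hdj, hcw]
      · exact (hrest m hm).symm
    rw [hd, agreeOff_setW.dist_eq hj, coordDist_setW]
    simp [Nat.dist]
  · have hfree : ∀ m, c.seq m = k - 1 → ¬c.Covered m := fun m hm hcov => by
      rw [c.seq_of_covered hcov] at hm; omega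
    have hw : ∀ m, c.seq m = k - 1 → c.w m = k - 1 := fun m hm => by
      rw [← c.seq_of_not_covered (hfree m hm), hm]
    have hd : d = c.insertPair j hj (hw j hcj) (hw _ hcj') (hfree j hcj) (hfree _ hcj') := by
      refine seq_injective hk (funext fun m => ?_)
      rw [seq_insertPair]
      split_ifs with hm
      · rcases hm with rfl | rfl
        exacts [hdj, hdj']
      · exact (hrest m (not_or.1 hm)).symm
    rw [hd, agreeOff_insertPair.dist_eq (by omega), coordDist_insertPair]

lemma seqAdj_of_agreeOff_of_w_eq_succ {i : ℕ} (hi : i < n) (h : c.AgreeOff d i)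
    (hs : c.s i = d.s i) (hw : d.w i = c.w i + 1) : SeqAdj n k c.seq d.seq := by
  have hcov : c.Covered i ↔ d.Covered i := by
    simp only [Covered, hs]
    grind [AgreeOff]
  have hfree : ¬c.Covered i := fun hc => by
    have := d.w_of_covered (hcov.1 hc)
    rw [c.w_of_covered hc] at hw
    omega
  have hd : d = c.setW i (c.w i + 1) hi (hw ▸ d.w_le i) hfree := by
    ext m
    · rw [setW_w, Function.update_apply]
      split_ifs with hm
      exacts [hm ▸ hw, (h m hm).1.symm]
    · by_cases hm : m = i
      exacts [hm ▸ hs.symm, (h m hm).2.symm]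
  rw [hd]
  exact seqAdj_setW

lemma seqAdj_of_agreeOff_of_s {i : ℕ} (h : c.AgreeOff d i) (hw : c.w i = d.w i)
    (hc : c.s i = false) (hd : d.s i = true) : SeqAdj n k c.seq d.seq := by
  obtain ⟨hi, hwi, hwi', -⟩ := d.s_spec i hd
  have hle : ∀ m, c.s m = true → d.s m = true := fun m hm => by
    by_cases hmi : m = i
    · simp [hmi, hc] at hm
    · rwa [← (h m hmi).2]
  obtain ⟨hfree, hfree'⟩ := not_covered_of_s_le hle hc hd
  have hd : d = c.insertPair i hi (hw.trans hwi) ((h (i + 1) (by omega)).1.trans hwi')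
      hfree hfree' := by
    ext m
    · by_cases hm : m = i
      exacts [hm ▸ hw.symm, (h m hm).1.symm]
    · rw [insertPair_s, Function.update_apply]
      split_ifs with hm
      exacts [hm ▸ hd, (h m hm).2.symm]
  rw [hd]
  exact seqAdj_insertPair

theorem seqAdj_of_dist_eq_one (h : c.dist d = 1) :
    SeqAdj n k c.seq d.seq ∨ SeqAdj n k d.seq c.seq := by
  obtain ⟨i, hi, hagree, h1⟩ := exists_agreeOff_of_dist_eq_one h
  unfold coordDist at h1
  split_ifs at h1 with hs
  · have : d.w i = c.w i + 1 ∨ c.w i = d.w i + 1 := by unfold Nat.dist at h1; omega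
    rcases this with hw | hw
    · exact Or.inl (seqAdj_of_agreeOff_of_w_eq_succ hi hagree hs hw)
    · exact Or.inr (seqAdj_of_agreeOff_of_w_eq_succ hi hagree.symm hs.symm hw)
  · have hw : c.w i = d.w i := Nat.eq_of_dist_eq_zero (by omega)
    cases hc : c.s i
    · exact Or.inl (seqAdj_of_agreeOff_of_s hagree hw hc (by simpa [hc] using Ne.symm hs))
    · exact Or.inr
        (seqAdj_of_agreeOff_of_s hagree.symm hw.symm (by simpa [hc] using Ne.symm hs) hc)

def median (x y z : PellCode n k) : PellCode n k where
  w i := median3 (x.w i) (y.w i) (z.w i)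
  s i := median3 (x.s i) (y.s i) (z.s i)
  w_le i := by
    have := x.w_le i
    have := y.w_le i
    have := z.w_le i
    simp only [median3]
    omega
  w_eq_zero i hi := by simp [x.w_eq_zero i hi, y.w_eq_zero i hi, z.w_eq_zero i hi, median3]
  s_spec i hi := by
    have hx := x.w_le
    have hy := y.w_le
    have hz := z.w_le
    simp only [Bool.median3_eq, Bool.or_eq_true, Bool.and_eq_true] at hi ⊢
    rcases hi with (⟨h, h'⟩ | ⟨h, h'⟩) | ⟨h, h'⟩ <;>
    · obtain ⟨h1, h2, h3, h4⟩ := PellCode.s_spec _ i h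
      obtain ⟨-, h2', h3', h4'⟩ := PellCode.s_spec _ i h'
      refine ⟨h1, ?_, ?_, by simp [h4, h4']⟩ <;>
      · simp only [median3]
        grind

lemma coordDist_add_eq_iff (x u y : PellCode n k) (i : ℕ) :
    x.coordDist u i + u.coordDist y i = x.coordDist y i ↔
      u.w i ∈ Set.uIcc (x.w i) (y.w i) ∧ u.s i ∈ Set.uIcc (x.s i) (y.s i) := by
  rw [← Nat.dist_add_dist_eq_iff, ← Bool.ite_add_ite_eq_ite_iff_mem_uIcc]
  have := Nat.dist.triangle_inequality (x.w i) (u.w i) (y.w i)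
  unfold coordDist
  split_ifs <;> simp_all <;> omega

lemma dist_add_dist_eq_iff (x u y : PellCode n k) :
    x.dist u + u.dist y = x.dist y ↔
      ∀ i < n, u.w i ∈ Set.uIcc (x.w i) (y.w i) ∧ u.s i ∈ Set.uIcc (x.s i) (y.s i) := by
  rw [dist, dist, dist, ← Finset.sum_add_distrib, eq_comm,
    Finset.sum_eq_sum_iff_of_le fun i _ => coordDist_triangle (c := x) (d := u) y i]
  simp only [Finset.mem_range, eq_comm (a := x.coordDist y _), coordDist_add_eq_iff]

theorem eq_median_iff (x y z u : PellCode n k) :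
    (x.dist u + u.dist y = x.dist y ∧ x.dist u + u.dist z = x.dist z ∧
      y.dist u + u.dist z = y.dist z) ↔ u = median x y z := by
  simp only [dist_add_dist_eq_iff]
  constructor
  · rintro ⟨hxy, hxz, hyz⟩
    ext i <;> by_cases hi : i < n
    · exact eq_median3_of_mem_uIcc (hxy i hi).1 (hxz i hi).1 (hyz i hi).1
    · rw [u.w_eq_zero i (by omega), (median x y z).w_eq_zero i (by omega)]
    · exact eq_median3_of_mem_uIcc (hxy i hi).2 (hxz i hi).2 (hyz i hi).2
    · rw [u.s_eq_false (by omega), (median x y z).s_eq_false (by omega)]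
  · rintro rfl
    exact ⟨fun i _ => ⟨(median3_mem_uIcc ..).1, (median3_mem_uIcc ..).1⟩,
      fun i _ => ⟨(median3_mem_uIcc ..).2.1, (median3_mem_uIcc ..).2.1⟩,
      fun i _ => ⟨(median3_mem_uIcc ..).2.2, (median3_mem_uIcc ..).2.2⟩⟩

theorem kPellGraph_adj_iff (hk : k ≠ 0) (u v : PellVert n k) :
    (kPellGraph n k).Adj u v ↔ (equiv hk u).dist (equiv hk v) = 1 := by
  rw [kPellGraph, SimpleGraph.fromRel_adj, pellAdj_iff_seqAdj, pellAdj_iff_seqAdj,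
    ← seq_equiv hk u, ← seq_equiv hk v]
  constructor
  · rintro ⟨-, h | h⟩
    · exact dist_eq_one_of_seqAdj hk h
    · exact dist_comm.trans (dist_eq_one_of_seqAdj hk h)
  · intro h
    exact ⟨fun huv => by simp [huv, dist_self] at h, seqAdj_of_dist_eq_one h⟩

theorem dist_kPellGraph (hk : k ≠ 0) (u v : PellVert n k) :
    (kPellGraph n k).dist u v = (equiv hk u).dist (equiv hk v) := by
  refine SimpleGraph.dist_eq_of_exists_adj_step (fun u v => (equiv hk u).dist (equiv hk v))
    (fun _ => dist_self) (fun _ _ _ => dist_triangle _)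
    (fun u v h => ((kPellGraph_adj_iff hk u v).1 h).le) (fun u v huv => ?_) u v
  obtain ⟨c', h1, h2⟩ := hasStepToward_of_ne ((equiv hk).injective.ne huv)
  refine ⟨(equiv hk).symm c', (kPellGraph_adj_iff hk _ _).2 ?_, ?_⟩ <;> simpa

end PellCode

end KPell

theorem kPellGraph_median_general (n k : ℕ) (hk : 2 ≤ k) (x y z : PellVert n k) :
    ∃! u : PellVert n k,
      (kPellGraph n k).dist x u + (kPellGraph n k).dist u y = (kPellGraph n k).dist x y ∧
      (kPellGraph n k).dist x u + (kPellGraph n k).dist u z = (kPellGraph n k).dist x z ∧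
      (kPellGraph n k).dist y u + (kPellGraph n k).dist u z = (kPellGraph n k).dist y z := by
  have hk0 : k ≠ 0 := by omega
  simp only [KPell.PellCode.dist_kPellGraph hk0, KPell.PellCode.eq_median_iff,
    ← Equiv.eq_symm_apply]
  exact existsUnique_eq

theorem kPellGraph_median (n k : ℕ) (hn : 1 ≤ n) (hk : 2 ≤ k) (x y z : PellVert n k) :
    ∃! u : PellVert n k,
      (kPellGraph n k).dist x u + (kPellGraph n k).dist u y = (kPellGraph n k).dist x y ∧
      (kPellGraph n k).dist x u + (kPellGraph n k).dist u z = (kPellGraph n k).dist x z ∧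
      (kPellGraph n k).dist y u + (kPellGraph n k).dist u z = (kPellGraph n k).dist y z :=
  kPellGraph_median_general n k hk x y z
end
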